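/- arXiv:2511.01783 — 6 statements merged into one kernel-verified Lean document; each statement's English description precedes it below -/
import Mathlib

section
/- The multimaximal coupling of a family of {0,1}-valued random variables is unique in distribution: any coupling (Y_1,...,Y_n) of Bernoulli(p_i) variables with P(Y_i = Y_j) = 1 - |p_i - p_j| for all i, j, where p_1 ≤ ... ≤ p_n, satisfies P(Y_1 ≤ Y_2 ≤ ... ≤ Y_n or Y_1 ≥ Y_2 ≥ ... ≥ Y_n) = 1, and hence its joint distribution is determined by the p_i. -/
open Finset
open scoped Classical

/-- A probability distribution on a finite type. -/
def IsDist {α : Type*} [Fintype α] (p : α → ℝ) : Prop :=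
  (∀ a, 0 ≤ p a) ∧ ∑ a, p a = 1

/-- `μ` is a coupling of Bernoulli variables with parameters `p i`. -/
def IsBernoulliFamilyCoupling {n : ℕ} (μ : (Fin n → Bool) → ℝ) (p : Fin n → ℝ) : Prop :=
  IsDist μ ∧ ∀ i, ∑ y ∈ Finset.univ.filter (fun y : Fin n → Bool => y i = true), μ y = p i

lemma mmc_cells {n : ℕ} {μ : (Fin n → Bool) → ℝ} {p : Fin n → ℝ}
    (hmono : ∀ i j : Fin n, i ≤ j → p i ≤ p j)
    (hμ : IsBernoulliFamilyCoupling μ p)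
    (hmax : ∀ i j, ∑ y ∈ Finset.univ.filter (fun y : Fin n → Bool => y i = y j), μ y
        = 1 - |p i - p j|)
    {i j : Fin n} (hij : i ≤ j) :
    (∑ y : Fin n → Bool, if y i = true ∧ y j = false then μ y else 0) = 0 ∧
    (∑ y : Fin n → Bool, if y i = false ∧ y j = true then μ y else 0) = p j - p i := by
  obtain ⟨⟨hpos, hsum⟩, hmarg⟩ := hμ
  set A := ∑ y : Fin n → Bool, if y i = true ∧ y j = false then μ y else 0 with hA
  set B := ∑ y : Fin n → Bool, if y i = false ∧ y j = true then μ y else 0 with hB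
  set T := ∑ y : Fin n → Bool, if y i = true ∧ y j = true then μ y else 0 with hT
  have habs : |p i - p j| = p j - p i := by
    rw [abs_sub_comm]; exact abs_of_nonneg (sub_nonneg.2 (hmono i j hij))
  have h1 : (1 - (p j - p i)) + A + B = 1 := by
    have h := hmax i j
    rw [Finset.sum_filter, habs] at h
    rw [← h, ← hsum, hA, hB, ← Finset.sum_add_distrib, ← Finset.sum_add_distrib]
    exact Finset.sum_congr rfl fun y _ => by
      cases h1 : y i <;> cases h2 : y j <;> simp [h1, h2]
  have h2 : T + A = p i := by
    have h := hmarg i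
    rw [Finset.sum_filter] at h
    rw [← h, hT, hA, ← Finset.sum_add_distrib]
    exact Finset.sum_congr rfl fun y _ => by
      cases h1 : y i <;> cases h2 : y j <;> simp [h1, h2]
  have h3 : T + B = p j := by
    have h := hmarg j
    rw [Finset.sum_filter] at h
    rw [← h, hT, hB, ← Finset.sum_add_distrib]
    exact Finset.sum_congr rfl fun y _ => by
      cases h1 : y i <;> cases h2 : y j <;> simp [h1, h2]
  constructor <;> linarith

lemma mmc_key0 {n : ℕ} {μ : (Fin n → Bool) → ℝ} {p : Fin n → ℝ}
    (hmono : ∀ i j : Fin n, i ≤ j → p i ≤ p j)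
    (hμ : IsBernoulliFamilyCoupling μ p)
    (hmax : ∀ i j, ∑ y ∈ Finset.univ.filter (fun y : Fin n → Bool => y i = y j), μ y
        = 1 - |p i - p j|)
    {i j : Fin n} (hij : i ≤ j) {y : Fin n → Bool} (hyi : y i = true) (hyj : y j = false) :
    μ y = 0 := by
  have h := (mmc_cells hmono hμ hmax hij).1
  have hpos := hμ.1.1
  have hnn : ∀ z ∈ Finset.univ, (0:ℝ) ≤ if z i = true ∧ z j = false then μ z else 0 := by
    intro z _
    split
    · exact hpos z
    · exact le_rfl
  have h0 := (Finset.sum_eq_zero_iff_of_nonneg hnn).1 h y (Finset.mem_univ y)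
  simpa [hyi, hyj] using h0

/-- Non-monotone patterns have measure zero. -/
lemma mmc_supp {n : ℕ} {μ : (Fin n → Bool) → ℝ} {p : Fin n → ℝ}
    (hmono : ∀ i j : Fin n, i ≤ j → p i ≤ p j)
    (hμ : IsBernoulliFamilyCoupling μ p)
    (hmax : ∀ i j, ∑ y ∈ Finset.univ.filter (fun y : Fin n → Bool => y i = y j), μ y
        = 1 - |p i - p j|)
    {y : Fin n → Bool} (hy : ¬ (∀ i j : Fin n, i ≤ j → y i ≤ y j)) :
    μ y = 0 := by
  push_neg at hy
  obtain ⟨i, j, hij, hle⟩ := hy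
  have hyi : y i = true ∧ y j = false := by
    cases h1 : y i <;> cases h2 : y j <;> rw [h1, h2] at hle
    · exact absurd hle (by decide)
    · exact absurd hle (by decide)
    · exact ⟨rfl, rfl⟩
    · exact absurd hle (by decide)
  exact mmc_key0 hmono hμ hmax hij hyi.1 hyi.2

/-- Value on the all-true-from-`i₀` pattern with `i₀` the least index (case least index "0"). -/
lemma mmc_val_top {n : ℕ} {μ : (Fin n → Bool) → ℝ} {p : Fin n → ℝ}
    (hmono : ∀ i j : Fin n, i ≤ j → p i ≤ p j)
    (hμ : IsBernoulliFamilyCoupling μ p)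
    (hmax : ∀ i j, ∑ y ∈ Finset.univ.filter (fun y : Fin n → Bool => y i = y j), μ y
        = 1 - |p i - p j|)
    {i₀ : Fin n} (h0 : ∀ k, i₀ ≤ k) {y : Fin n → Bool}
    (hchar : ∀ k, y k = true ↔ i₀ ≤ k) :
    μ y = p i₀ := by
  have h := hμ.2 i₀
  rw [← h]
  rw [Finset.sum_filter]
  rw [Finset.sum_eq_single y]
  · simp [(hchar i₀).2 (le_refl i₀)]
  · intro z _ hzy
    by_cases hc : z i₀ = true
    · obtain ⟨k, hk⟩ := Function.ne_iff.1 hzy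
      have hyk : y k = true := (hchar k).2 (h0 k)
      have hzk : z k = false := by
        cases hz : z k
        · rfl
        · exact absurd (hz.trans hyk.symm) hk
      simp [hc, mmc_key0 hmono hμ hmax (h0 k) hc hzk]
    · simp [hc]
  · intro h'
    exact absurd (Finset.mem_univ y) h'

/-- Value on the threshold pattern with least true index `i₀` having predecessor `i₁`. -/
lemma mmc_val_step {n : ℕ} {μ : (Fin n → Bool) → ℝ} {p : Fin n → ℝ}
    (hmono : ∀ i j : Fin n, i ≤ j → p i ≤ p j)
    (hμ : IsBernoulliFamilyCoupling μ p)
    (hmax : ∀ i j, ∑ y ∈ Finset.univ.filter (fun y : Fin n → Bool => y i = y j), μ y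
        = 1 - |p i - p j|)
    {i₀ i₁ : Fin n} (h01 : i₁ ≤ i₀) (hpred : ∀ k : Fin n, k < i₀ → k ≤ i₁)
    (h10 : ¬ i₀ ≤ i₁) {y : Fin n → Bool}
    (hchar : ∀ k, y k = true ↔ i₀ ≤ k) :
    μ y = p i₀ - p i₁ := by
  have hB := (mmc_cells hmono hμ hmax h01).2
  rw [← hB]
  rw [Finset.sum_eq_single y]
  · have hy1 : y i₁ = false := by
      cases hz : y i₁
      · rfl
      · exact absurd ((hchar i₁).1 hz) h10
    simp [hy1, (hchar i₀).2 (le_refl i₀)]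
  · intro z _ hzy
    by_cases hc : z i₁ = false ∧ z i₀ = true
    · obtain ⟨k, hk⟩ := Function.ne_iff.1 hzy
      by_cases hik : i₀ ≤ k
      · have hyk : y k = true := (hchar k).2 hik
        have hzk : z k = false := by
          cases hz : z k
          · rfl
          · exact absurd (hz.trans hyk.symm) hk
        simp [mmc_key0 hmono hμ hmax hik hc.2 hzk]
      · have hk1 : k ≤ i₁ := hpred k (lt_of_not_ge hik)
        have hyk : y k = false := by
          cases hz : y k
          · rfl
          · exact absurd ((hchar k).1 hz) hik
        have hzk : z k = true := by
          cases hz : z k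
          · exact absurd (hz.trans hyk.symm) hk
          · rfl
        simp [mmc_key0 hmono hμ hmax hk1 hzk hc.1]
    · simp only [if_neg hc]
  · intro h'
    exact absurd (Finset.mem_univ y) h'

/-- Value on the all-false pattern (for `n > 0`). -/
lemma mmc_val_false {n : ℕ} {μ : (Fin n → Bool) → ℝ} {p : Fin n → ℝ}
    (hmono : ∀ i j : Fin n, i ≤ j → p i ≤ p j)
    (hμ : IsBernoulliFamilyCoupling μ p)
    (hmax : ∀ i j, ∑ y ∈ Finset.univ.filter (fun y : Fin n → Bool => y i = y j), μ y
        = 1 - |p i - p j|)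
    (hn : 0 < n) :
    μ (fun _ => false) = 1 - p ⟨n - 1, Nat.sub_lt hn one_pos⟩ := by
  obtain ⟨⟨hpos, hsum⟩, hmarg⟩ := hμ
  set last : Fin n := ⟨n - 1, Nat.sub_lt hn one_pos⟩ with hlast
  set cf : Fin n → Bool := fun _ => false with hcf
  have hsub : Finset.univ.filter (fun y : Fin n → Bool => y last = true)
      ⊆ Finset.univ.filter (fun y : Fin n → Bool => y ≠ cf) := by
    intro z hz
    simp only [Finset.mem_filter, Finset.mem_univ, true_and] at hz ⊢
    intro hzeq
    rw [hzeq] at hz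
    simp at hz
  have heq : ∑ y ∈ Finset.univ.filter (fun y : Fin n → Bool => y last = true), μ y
      = ∑ y ∈ Finset.univ.filter (fun y : Fin n → Bool => y ≠ cf), μ y := by
    apply Finset.sum_subset hsub
    intro z hz hznot
    simp only [Finset.mem_filter, Finset.mem_univ, true_and] at hz hznot
    have hzl : z last = false := by
      cases h : z last
      · rfl
      · exact absurd h hznot
    obtain ⟨k, hk⟩ := Function.ne_iff.1 hz
    have hzk : z k = true := by
      cases h : z k
      · exact absurd (by simp [hcf, h]) hk
      · rfl
    have hkl : k ≤ last := by
      rw [Fin.le_def]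
      simp only [hlast]
      omega
    exact mmc_key0 hmono ⟨⟨hpos, hsum⟩, hmarg⟩ hmax hkl hzk hzl
  have hsplit := Finset.sum_filter_add_sum_filter_not Finset.univ
    (fun y : Fin n → Bool => y ≠ cf) μ
  have hone : ∑ y ∈ Finset.univ.filter (fun y : Fin n → Bool => ¬ y ≠ cf), μ y = μ cf := by
    rw [show Finset.univ.filter (fun y : Fin n → Bool => ¬ y ≠ cf)
        = Finset.univ.filter (fun y : Fin n → Bool => y = cf) by
      apply Finset.filter_congr; intro y _; simp]
    rw [Finset.filter_eq']
    simp
  have hm := hmarg last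
  rw [heq] at hm
  rw [hsum, hone] at hsplit
  linarith

/-- The joint distribution is determined by `p`. -/
lemma mmc_unique {n : ℕ} {μ ν : (Fin n → Bool) → ℝ} {p : Fin n → ℝ}
    (hmono : ∀ i j : Fin n, i ≤ j → p i ≤ p j)
    (hμ : IsBernoulliFamilyCoupling μ p)
    (hmax : ∀ i j, ∑ y ∈ Finset.univ.filter (fun y : Fin n → Bool => y i = y j), μ y
        = 1 - |p i - p j|)
    (hν : IsBernoulliFamilyCoupling ν p)
    (hmaxν : ∀ i j, ∑ y ∈ Finset.univ.filter (fun y : Fin n → Bool => y i = y j), ν y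
        = 1 - |p i - p j|) :
    ν = μ := by
  funext y
  by_cases hm : ∀ i j : Fin n, i ≤ j → y i ≤ y j
  · by_cases he : ∃ i, y i = true
    · set s := Finset.univ.filter (fun i : Fin n => y i = true) with hs
      have hne : s.Nonempty := by
        obtain ⟨i, hi⟩ := he
        exact ⟨i, by simp [hs, hi]⟩
      set i₀ := s.min' hne with hi₀
      have hmem : y i₀ = true := by
        have := s.min'_mem hne
        simp only [hs, Finset.mem_filter] at this
        exact this.2
      have hchar : ∀ k, y k = true ↔ i₀ ≤ k := by
        intro k
        constructor
        · intro hk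
          exact s.min'_le k (by simp [hs, hk])
        · intro hk
          have := hm i₀ k hk
          rw [hmem] at this
          cases h : y k
          · rw [h] at this
            exact absurd this (by decide)
          · rfl
      by_cases h0 : (i₀ : ℕ) = 0
      · have hall : ∀ k, i₀ ≤ k := by
          intro k; rw [Fin.le_def]; omega
        rw [mmc_val_top hmono hν hmaxν hall hchar,
          mmc_val_top hmono hμ hmax hall hchar]
      · have hi0pos : 0 < (i₀ : ℕ) := Nat.pos_of_ne_zero h0
        set i₁ : Fin n := ⟨(i₀ : ℕ) - 1, lt_trans (Nat.sub_lt hi0pos one_pos) i₀.isLt⟩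
          with hi₁
        have h01 : i₁ ≤ i₀ := by
          rw [Fin.le_def]
          show (i₀ : ℕ) - 1 ≤ (i₀ : ℕ)
          omega
        have hpred : ∀ k : Fin n, k < i₀ → k ≤ i₁ := by
          intro k hk
          rw [Fin.lt_def] at hk
          rw [Fin.le_def]
          show (k : ℕ) ≤ (i₀ : ℕ) - 1
          omega
        have h10 : ¬ i₀ ≤ i₁ := by
          rw [Fin.le_def]
          show ¬ (i₀ : ℕ) ≤ (i₀ : ℕ) - 1
          omega
        rw [mmc_val_step hmono hν hmaxν h01 hpred h10 hchar,
          mmc_val_step hmono hμ hmax h01 hpred h10 hchar]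
    · push_neg at he
      have hyf : y = fun _ => false := by
        funext k
        cases h : y k
        · rfl
        · exact absurd h (by simpa using he k)
      rcases Nat.eq_zero_or_pos n with hn | hn
      · subst hn
        have huniv : ∀ z : Fin 0 → Bool, z = y := fun z => funext fun i => i.elim0
        have hμ1 : μ y = 1 := by
          have := hμ.1.2
          rwa [Finset.sum_eq_single y (fun z _ hz => absurd (huniv z) hz)
            (fun h' => absurd (Finset.mem_univ y) h')] at this
        have hν1 : ν y = 1 := by
          have := hν.1.2
          rwa [Finset.sum_eq_single y (fun z _ hz => absurd (huniv z) hz)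
            (fun h' => absurd (Finset.mem_univ y) h')] at this
        rw [hμ1, hν1]
      · rw [hyf, mmc_val_false hmono hν hmaxν hn, mmc_val_false hmono hμ hmax hn]
  · rw [mmc_supp hmono hν hmaxν hm, mmc_supp hmono hμ hmax hm]

/-- The multimaximal coupling of a family of `{0,1}`-valued random variables is unique in
distribution: any coupling with `P(Y i = Y j) = 1 - |p i - p j|` for all `i, j`, where the
`p i` are nondecreasing, is supported on monotone-or-antitone value patterns (probability 1),
and hence its joint distribution is uniquely determined by the `p i`. -/
theorem stmt5 (n : ℕ) (p : Fin n → ℝ) (hp : ∀ i, 0 ≤ p i ∧ p i ≤ 1)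
    (hmono : ∀ i j : Fin n, i ≤ j → p i ≤ p j)
    (μ : (Fin n → Bool) → ℝ) (hμ : IsBernoulliFamilyCoupling μ p)
    (hmax : ∀ i j, ∑ y ∈ Finset.univ.filter (fun y : Fin n → Bool => y i = y j), μ y
        = 1 - |p i - p j|) :
    (∑ y ∈ Finset.univ.filter (fun y : Fin n → Bool =>
        (∀ i j : Fin n, i ≤ j → y i ≤ y j) ∨ (∀ i j : Fin n, i ≤ j → y j ≤ y i)), μ y) = 1
    ∧ ∀ ν : (Fin n → Bool) → ℝ, IsBernoulliFamilyCoupling ν p →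
        (∀ i j, ∑ y ∈ Finset.univ.filter (fun y : Fin n → Bool => y i = y j), ν y
            = 1 - |p i - p j|) → ν = μ := by
  constructor
  · have hsplit := Finset.sum_filter_add_sum_filter_not Finset.univ
      (fun y : Fin n → Bool =>
        (∀ i j : Fin n, i ≤ j → y i ≤ y j) ∨ (∀ i j : Fin n, i ≤ j → y j ≤ y i)) μ
    have hzero : ∑ y ∈ Finset.univ.filter (fun y : Fin n → Bool =>
        ¬ ((∀ i j : Fin n, i ≤ j → y i ≤ y j) ∨ (∀ i j : Fin n, i ≤ j → y j ≤ y i))), μ y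
        = 0 := by
      apply Finset.sum_eq_zero
      intro y hy
      simp only [Finset.mem_filter, Finset.mem_univ, true_and, not_or] at hy
      exact mmc_supp hmono hμ hmax hy.1
    rw [hμ.1.2, hzero] at hsplit
    linarith
  · intro ν hν hmaxν
    exact mmc_unique hmono hμ hmax hν hmaxν
end

section
/- In a multimaximal coupling of Bernoulli variables with parameters p_1 ≤ p_2 ≤ ... ≤ p_n constructed via a single uniform variable, maximality of consecutive pairs implies maximality of all pairs: if a coupling (Y_1,...,Y_n) satisfies P(Y_i = Y_{i+1}) = 1 - (p_{i+1} - p_i) for all i, then P(Y_i = Y_j) = 1 - (p_j - p_i) for all i ≤ j. -/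
open Finset
open scoped Classical

/-- If a coupling of Bernoulli variables with nondecreasing parameters `p 1 ≤ ... ≤ p n`
satisfies `P(Y i = Y (i+1)) = 1 - (p (i+1) - p i)` for all consecutive pairs, then
`P(Y i = Y j) = 1 - (p j - p i)` for all `i ≤ j`. -/
theorem stmt7 (n : ℕ) (p : Fin n → ℝ) (hp : ∀ i, 0 ≤ p i ∧ p i ≤ 1)
    (hmono : ∀ i j : Fin n, i ≤ j → p i ≤ p j)
    (μ : (Fin n → Bool) → ℝ) (hμ : IsDist μ)
    (hmarg : ∀ i, ∑ y ∈ Finset.univ.filter (fun y : Fin n → Bool => y i = true), μ y = p i)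
    (hconsec : ∀ (i : Fin n) (h : (i : ℕ) + 1 < n),
        ∑ y ∈ Finset.univ.filter (fun y : Fin n → Bool => y i = y ⟨(i : ℕ) + 1, h⟩), μ y
          = 1 - (p ⟨(i : ℕ) + 1, h⟩ - p i)) :
    ∀ i j : Fin n, i ≤ j →
      ∑ y ∈ Finset.univ.filter (fun y : Fin n → Bool => y i = y j), μ y = 1 - (p j - p i) := by
  obtain ⟨hμ0, hμ1⟩ := hμ
  -- notation
  set A : Fin n → Fin n → ℝ := fun i j =>
    ∑ y ∈ Finset.univ.filter (fun y : Fin n → Bool => y i = true ∧ y j = false), μ y with hA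
  set B : Fin n → Fin n → ℝ := fun i j =>
    ∑ y ∈ Finset.univ.filter (fun y : Fin n → Bool => y i = false ∧ y j = true), μ y with hB
  set E : Fin n → Fin n → ℝ := fun i j =>
    ∑ y ∈ Finset.univ.filter (fun y : Fin n → Bool => y i = y j), μ y with hE
  have htot : ∀ i j : Fin n, E i j + A i j + B i j = 1 := by
    intro i j
    rw [hA, hB, hE]
    simp only
    rw [Finset.sum_filter, Finset.sum_filter, Finset.sum_filter,
      ← Finset.sum_add_distrib, ← Finset.sum_add_distrib, ← hμ1]
    apply Finset.sum_congr rfl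
    intro y _
    cases h1 : y i <;> cases h2 : y j <;> simp [h1, h2]
  have hdiff : ∀ i j : Fin n, B i j - A i j = p j - p i := by
    intro i j
    rw [hA, hB, ← hmarg i, ← hmarg j]
    simp only
    rw [Finset.sum_filter, Finset.sum_filter, Finset.sum_filter, Finset.sum_filter,
      ← Finset.sum_sub_distrib, ← Finset.sum_sub_distrib]
    apply Finset.sum_congr rfl
    intro y _
    cases h1 : y i <;> cases h2 : y j <;> simp [h1, h2]
  have key : ∀ i j : Fin n, E i j = 1 - ((p j - p i) + 2 * A i j) := by
    intro i j
    have := htot i j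
    have := hdiff i j
    linarith
  -- consecutive A = 0
  have hc0 : ∀ (i : Fin n) (h : (i : ℕ) + 1 < n), A i ⟨(i : ℕ) + 1, h⟩ = 0 := by
    intro i h
    have h1 := hconsec i h
    have h2 := key i ⟨(i : ℕ) + 1, h⟩
    rw [hE] at h2
    simp only at h2
    rw [h1] at h2
    linarith
  -- general A = 0 by induction on gap
  have hz : ∀ m : ℕ, ∀ i j : Fin n, (j : ℕ) = (i : ℕ) + m → A i j = 0 := by
    intro m
    induction m with
    | zero =>
      intro i j hij
      have : i = j := Fin.ext (by omega)
      subst this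
      rw [hA]
      simp
    | succ m ih =>
      intro i j hij
      have hk : (i : ℕ) + m < n := by omega
      set k : Fin n := ⟨(i : ℕ) + m, hk⟩ with hkdef
      have h1 : A i k = 0 := ih i k rfl
      have h2 : A k j = 0 := by
        have hn : (k : ℕ) + 1 < n := by simp [hkdef]; omega
        have : j = ⟨(k : ℕ) + 1, hn⟩ := Fin.ext (by simp [hkdef]; omega)
        rw [this]
        exact hc0 k hn
      have hle : A i j ≤ A i k + A k j := by
        rw [hA]
        simp only
        rw [Finset.sum_filter, Finset.sum_filter, Finset.sum_filter,
          ← Finset.sum_add_distrib]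
        apply Finset.sum_le_sum
        intro y _
        cases hy1 : y i <;> cases hy2 : y j <;> cases hy3 : y k <;>
          simp [hy1, hy2, hy3, hμ0 y] <;> positivity
      have hge : 0 ≤ A i j := by
        rw [hA]
        exact Finset.sum_nonneg fun y _ => hμ0 y
      linarith
  intro i j hij
  have hAz : A i j = 0 := hz ((j : ℕ) - (i : ℕ)) i j (by omega)
  have := key i j
  rw [hE] at this
  simp only at this
  rw [this, hAz]
  ring
end

section
/- For a consistently connected cyclic system of rank 2 (the Bell/CHSH-type system) of ±1-valued random variables, the system is noncontextual if and only if the CHSH inequality holds: max over the four sign choices with an odd number of minus signs of |±E[A_1 B_1] ± E[A_1 B_2] ± E[A_2 B_1] ± E[A_2 B_2]| ≤ 2, where the expectations are taken within the respective contexts. -/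
open Finset
open scoped Classical

/-- The value `±1` encoded by a `Bool`. -/
def sgn (b : Bool) : ℝ := if b then 1 else -1

/-!
Every law on `{±1}²` is determined by its two means and its correlation. A joint law of
`(A₀, A₁, B₀, B₁)` satisfies the CHSH inequalities because they hold pointwise for `±1` values.
Conversely, three `±1` variables with prescribed pairwise laws have a joint law as soon as their
three pairwise correlations are themselves the means and correlation of some pair of `±1`
variables. It therefore suffices to find a correlation `s` for `(B₀, B₁)` such that
`(E B₀, E B₁, s)` and, for each `i`, `(E AᵢB₀, E AᵢB₁, s)` are admissible: each requirement confines
`s` to an interval, and the CHSH inequalities are exactly what makes the intervals for `A₀` and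
`A₁` overlap. The resulting joint laws of `(Aᵢ, B₀, B₁)` agree on `(B₀, B₁)`, and gluing them
conditionally independently given `(B₀, B₁)` gives the joint law.
-/

theorem sgn_mul_self (b : Bool) : sgn b * sgn b = 1 := by
  cases b <;> norm_num [sgn]

theorem sgn_eq_one_or_eq_neg_one (b : Bool) : sgn b = 1 ∨ sgn b = -1 := by
  cases b <;> simp [sgn]

theorem add_add_add_le_two_of_mul_eq_neg_one {t₁ t₂ t₃ t₄ : ℝ}
    (h₁ : t₁ = 1 ∨ t₁ = -1) (h₂ : t₂ = 1 ∨ t₂ = -1) (h₃ : t₃ = 1 ∨ t₃ = -1)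
    (h₄ : t₄ = 1 ∨ t₄ = -1) (hprod : t₁ * t₂ * t₃ * t₄ = -1) : t₁ + t₂ + t₃ + t₄ ≤ 2 := by
  rcases h₁ with rfl | rfl <;> rcases h₂ with rfl | rfl <;> rcases h₃ with rfl | rfl <;>
    rcases h₄ with rfl | rfl <;> linarith

theorem chsh_sum_sgn_le_two {s : Fin 2 → Fin 2 → ℝ} (hs : ∀ i j, s i j = 1 ∨ s i j = -1)
    (hodd : s 0 0 * s 0 1 * s 1 0 * s 1 1 = -1) (x y : Fin 2 → Bool) :
    ∑ i, ∑ j, s i j * (sgn (x i) * sgn (y j)) ≤ 2 := by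
  have hterm : ∀ i j, s i j * (sgn (x i) * sgn (y j)) = 1 ∨
      s i j * (sgn (x i) * sgn (y j)) = -1 := by
    intro i j
    rcases hs i j with h | h <;> rcases sgn_eq_one_or_eq_neg_one (x i) with hx | hx <;>
      rcases sgn_eq_one_or_eq_neg_one (y j) with hy | hy <;> simp [h, hx, hy]
  rw [Fin.sum_univ_two, Fin.sum_univ_two, Fin.sum_univ_two, ← add_assoc]
  refine add_add_add_le_two_of_mul_eq_neg_one (hterm 0 0) (hterm 0 1) (hterm 1 0) (hterm 1 1) ?_
  calc _ = s 0 0 * s 0 1 * s 1 0 * s 1 1 * ((sgn (x 0) * sgn (x 0)) * (sgn (x 1) * sgn (x 1))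
          * ((sgn (y 0) * sgn (y 0)) * (sgn (y 1) * sgn (y 1)))) := by ring
    _ = -1 := by simp only [hodd, sgn_mul_self]; norm_num

theorem sum_mul_sum_filter {V α β : Type*} [Fintype V] [Fintype α] [Fintype β]
    [DecidableEq α] [DecidableEq β] (ν : V → ℝ) (f : V → α) (g : V → β) (w : α → β → ℝ) :
    ∑ a, ∑ b, w a b * ∑ v ∈ univ.filter (fun v => f v = a ∧ g v = b), ν v
      = ∑ v, w (f v) (g v) * ν v := by
  rw [← sum_fiberwise univ (fun v => (f v, g v)), Fintype.sum_prod_type]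
  refine sum_congr rfl fun a _ => sum_congr rfl fun b _ => ?_
  rw [mul_sum]
  refine sum_congr (by simp only [Prod.mk.injEq]) fun v hv => ?_
  obtain ⟨rfl, rfl⟩ := (mem_filter.1 hv).2
  rfl

noncomputable def corr (p : Bool × Bool → ℝ) : ℝ := ∑ a, ∑ b, sgn a * sgn b * p (a, b)

theorem chsh_le_two_of_joint {μ : Fin 2 → Fin 2 → Bool × Bool → ℝ}
    {ν : (Fin 2 → Bool) × (Fin 2 → Bool) → ℝ} (hν : IsDist ν)
    (hmarg : ∀ i j a b, ∑ v ∈ univ.filter (fun v => v.1 i = a ∧ v.2 j = b), ν v = μ i j (a, b))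
    {s : Fin 2 → Fin 2 → ℝ} (hs : ∀ i j, s i j = 1 ∨ s i j = -1)
    (hodd : s 0 0 * s 0 1 * s 1 0 * s 1 1 = -1) :
    ∑ i, ∑ j, s i j * corr (μ i j) ≤ 2 := by
  have hcorr : ∀ i j, corr (μ i j) = ∑ v, sgn (v.1 i) * sgn (v.2 j) * ν v := fun i j => by
    simp only [corr, ← hmarg i j]
    exact sum_mul_sum_filter ν (·.1 i) (·.2 j) fun a b => sgn a * sgn b
  calc ∑ i, ∑ j, s i j * corr (μ i j)
      = ∑ v, (∑ i, ∑ j, s i j * (sgn (v.1 i) * sgn (v.2 j))) * ν v := by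
        simp only [hcorr, mul_sum, Fin.sum_univ_two, ← sum_add_distrib]
        exact sum_congr rfl fun v _ => by ring
    _ ≤ ∑ v, 2 * ν v := sum_le_sum fun v _ =>
        mul_le_mul_of_nonneg_right (chsh_sum_sgn_le_two hs hodd v.1 v.2) (hν.1 v)
    _ = 2 := by rw [← mul_sum, hν.2, mul_one]

noncomputable def mean₁ (p : Bool × Bool → ℝ) : ℝ := ∑ a, sgn a * ∑ b, p (a, b)

noncomputable def mean₂ (p : Bool × Bool → ℝ) : ℝ := ∑ b, sgn b * ∑ a, p (a, b)

noncomputable def pairLaw (m₁ m₂ c : ℝ) (x y : Bool) : ℝ :=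
  (1 + sgn x * m₁ + sgn y * m₂ + sgn x * sgn y * c) / 4

def IsPairMoments (m₁ m₂ c : ℝ) : Prop := ∀ x y, 0 ≤ pairLaw m₁ m₂ c x y

theorem apply_eq_pairLaw {p : Bool × Bool → ℝ} (hp : ∑ x, p x = 1) (x y : Bool) :
    p (x, y) = pairLaw (mean₁ p) (mean₂ p) (corr p) x y := by
  simp only [Fintype.sum_prod_type, Fintype.sum_bool] at hp
  cases x <;> cases y <;>
    simp only [pairLaw, mean₁, mean₂, corr, Fintype.sum_bool, sgn, Bool.false_eq_true,
      ↓reduceIte] <;> linarith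

theorem mean₁_eq_of_sum_eq {p q : Bool × Bool → ℝ} (h : ∀ a, ∑ b, p (a, b) = ∑ b, q (a, b)) :
    mean₁ p = mean₁ q := by
  simp only [mean₁, h]

theorem mean₂_eq_of_sum_eq {p q : Bool × Bool → ℝ} (h : ∀ b, ∑ a, p (a, b) = ∑ a, q (a, b)) :
    mean₂ p = mean₂ q := by
  simp only [mean₂, h]

theorem apply_eq_pairLaw_of_sum_eq {μ : Fin 2 → Fin 2 → Bool × Bool → ℝ}
    (hdist : ∀ i j, IsDist (μ i j)) (hccA : ∀ i a, ∑ b, μ i 0 (a, b) = ∑ b, μ i 1 (a, b))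
    (hccB : ∀ j b, ∑ a, μ 0 j (a, b) = ∑ a, μ 1 j (a, b)) (i j : Fin 2) (x y : Bool) :
    μ i j (x, y) = pairLaw (mean₁ (μ i 0)) (mean₂ (μ 0 j)) (corr (μ i j)) x y := by
  rw [apply_eq_pairLaw (hdist i j).2]
  congr 1
  · fin_cases j
    exacts [rfl, (mean₁_eq_of_sum_eq (hccA i)).symm]
  · fin_cases i
    exacts [rfl, (mean₂_eq_of_sum_eq (hccB j)).symm]

theorem isPairMoments_iff {m₁ m₂ c : ℝ} :
    IsPairMoments m₁ m₂ c ↔ 0 ≤ 1 + m₁ + m₂ + c ∧ 0 ≤ 1 + m₁ - m₂ - c ∧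
      0 ≤ 1 - m₁ + m₂ - c ∧ 0 ≤ 1 - m₁ - m₂ + c := by
  simp only [IsPairMoments, pairLaw, Bool.forall_bool, sgn, Bool.false_eq_true, ↓reduceIte]
  constructor
  · rintro ⟨⟨h₁, h₂⟩, h₃, h₄⟩
    refine ⟨?_, ?_, ?_, ?_⟩ <;> linarith
  · rintro ⟨h₁, h₂, h₃, h₄⟩
    refine ⟨⟨?_, ?_⟩, ?_, ?_⟩ <;> linarith

theorem isPairMoments_iff_abs {m₁ m₂ c : ℝ} :
    IsPairMoments m₁ m₂ c ↔ |m₁ + m₂| - 1 ≤ c ∧ c ≤ 1 - |m₁ - m₂| := by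
  rw [isPairMoments_iff]
  constructor
  · rintro ⟨h₁, h₂, h₃, h₄⟩
    exact ⟨sub_le_iff_le_add.2 (abs_le'.2 ⟨by linarith, by linarith⟩),
      le_sub_comm.2 (abs_le'.2 ⟨by linarith, by linarith⟩)⟩
  · rintro ⟨hl, hu⟩
    have := le_abs_self (m₁ + m₂); have := neg_abs_le (m₁ + m₂)
    have := le_abs_self (m₁ - m₂); have := neg_abs_le (m₁ - m₂)
    refine ⟨?_, ?_, ?_, ?_⟩ <;> linarith

theorem IsPairMoments.abs_add_add_abs_sub_le_two {a b₁ b₂ c₁ c₂ : ℝ}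
    (h₁ : IsPairMoments a b₁ c₁) (h₂ : IsPairMoments a b₂ c₂) :
    (|b₁ + b₂| + |b₁ - b₂| ≤ 2 ∧ |c₁ + c₂| + |c₁ - c₂| ≤ 2) ∧
      (|b₁ + b₂| + |c₁ - c₂| ≤ 2 ∧ |c₁ + c₂| + |b₁ - b₂| ≤ 2) := by
  obtain ⟨h₁₁, h₁₂, h₁₃, h₁₄⟩ := isPairMoments_iff.1 h₁
  obtain ⟨h₂₁, h₂₂, h₂₃, h₂₄⟩ := isPairMoments_iff.1 h₂
  refine ⟨⟨?_, ?_⟩, ?_, ?_⟩ <;>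
    rcases abs_cases (b₁ + b₂) with ⟨hb, -⟩ | ⟨hb, -⟩ <;>
    rcases abs_cases (b₁ - b₂) with ⟨hb', -⟩ | ⟨hb', -⟩ <;>
    rcases abs_cases (c₁ + c₂) with ⟨hc, -⟩ | ⟨hc, -⟩ <;>
    rcases abs_cases (c₁ - c₂) with ⟨hc', -⟩ | ⟨hc', -⟩ <;> linarith

theorem exists_eq_abs_mul (x : ℝ) : ∃ ε : ℝ, (ε = 1 ∨ ε = -1) ∧ |x| = ε * x := by
  rcases abs_cases x with ⟨h, -⟩ | ⟨h, -⟩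
  exacts [⟨1, .inl rfl, by rw [h, one_mul]⟩, ⟨-1, .inr rfl, by rw [h, neg_one_mul]⟩]

theorem abs_add_add_abs_sub_le_two_of_chsh {c : Fin 2 → Fin 2 → ℝ}
    (hC : ∀ s : Fin 2 → Fin 2 → ℝ, (∀ i j, s i j = 1 ∨ s i j = -1) →
      s 0 0 * s 0 1 * s 1 0 * s 1 1 = -1 → ∑ i, ∑ j, s i j * c i j ≤ 2) :
    |c 0 0 + c 0 1| + |c 1 0 - c 1 1| ≤ 2 ∧ |c 1 0 + c 1 1| + |c 0 0 - c 0 1| ≤ 2 := by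
  have key : ∀ ε δ : ℝ, (ε = 1 ∨ ε = -1) → (δ = 1 ∨ δ = -1) →
      ε * (c 0 0 + c 0 1) + δ * (c 1 0 - c 1 1) ≤ 2 ∧
        ε * (c 1 0 + c 1 1) + δ * (c 0 0 - c 0 1) ≤ 2 := by
    intro ε δ hε hδ
    have hsigns : ∀ s : Fin 2 → Fin 2 → ℝ, s = ![![ε, ε], ![δ, -δ]] ∨ s = ![![δ, -δ], ![ε, ε]] →
        (∀ i j, s i j = 1 ∨ s i j = -1) ∧ s 0 0 * s 0 1 * s 1 0 * s 1 1 = -1 := by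
      rintro s (rfl | rfl) <;> rcases hε with rfl | rfl <;> rcases hδ with rfl | rfl <;>
        simp [Fin.forall_fin_two]
    have h₁ := hC _ (hsigns _ (.inl rfl)).1 (hsigns _ (.inl rfl)).2
    have h₂ := hC _ (hsigns _ (.inr rfl)).1 (hsigns _ (.inr rfl)).2
    simp only [Fin.sum_univ_two, Matrix.cons_val_zero, Matrix.cons_val_one] at h₁ h₂
    constructor <;> linarith
  obtain ⟨ε₀, hε₀, h₀⟩ := exists_eq_abs_mul (c 0 0 + c 0 1)
  obtain ⟨δ₁, hδ₁, h₁⟩ := exists_eq_abs_mul (c 1 0 - c 1 1)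
  obtain ⟨ε₁, hε₁, h₁'⟩ := exists_eq_abs_mul (c 1 0 + c 1 1)
  obtain ⟨δ₀, hδ₀, h₀'⟩ := exists_eq_abs_mul (c 0 0 - c 0 1)
  rw [h₀, h₁, h₁', h₀']
  exact ⟨(key ε₀ δ₁ hε₀ hδ₁).1, (key ε₁ δ₀ hε₁ hδ₀).2⟩

theorem exists_isPairMoments_of_chsh {a b : Fin 2 → ℝ} {c : Fin 2 → Fin 2 → ℝ}
    (hpair : ∀ i j, IsPairMoments (a i) (b j) (c i j))
    (hchsh : |c 0 0 + c 0 1| + |c 1 0 - c 1 1| ≤ 2 ∧ |c 1 0 + c 1 1| + |c 0 0 - c 0 1| ≤ 2) :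
    ∃ s, IsPairMoments (b 0) (b 1) s ∧ ∀ i, IsPairMoments (c i 0) (c i 1) s := by
  obtain ⟨⟨hBB, h00⟩, hB0, h0B⟩ := (hpair 0 0).abs_add_add_abs_sub_le_two (hpair 0 1)
  obtain ⟨⟨-, h11⟩, hB1, h1B⟩ := (hpair 1 0).abs_add_add_abs_sub_le_two (hpair 1 1)
  obtain ⟨h01, h10⟩ := hchsh
  -- `IsPairMoments u v s` confines `s` to `[|u + v| - 1, 1 - |u - v|]`; take the largest left end
  set M := max |b 0 + b 1| (max |c 0 0 + c 0 1| |c 1 0 + c 1 1|)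
  have hM : ∀ U, |b 0 + b 1| + U ≤ 2 → |c 0 0 + c 0 1| + U ≤ 2 → |c 1 0 + c 1 1| + U ≤ 2 →
      M - 1 ≤ 1 - U := fun U h h' h'' => by
    have : M ≤ 2 - U := max_le (by linarith) (max_le (by linarith) (by linarith))
    linarith
  refine ⟨M - 1, isPairMoments_iff_abs.2 ⟨sub_le_sub_right (le_max_left _ _) 1, hM _ hBB h0B h1B⟩,
    Fin.forall_fin_two.2 ⟨isPairMoments_iff_abs.2 ⟨?_, hM _ hB0 h00 h10⟩,
      isPairMoments_iff_abs.2 ⟨?_, hM _ hB1 h01 h11⟩⟩⟩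
  exacts [sub_le_sub_right (le_max_of_le_right (le_max_left _ _)) 1,
    sub_le_sub_right (le_max_of_le_right (le_max_right _ _)) 1]

theorem exists_forall_nonneg_add_mul {W : Type*} [Fintype W] {L σ : W → ℝ}
    (hσ : ∀ w, σ w = 1 ∨ σ w = -1) {w₀ : W} (hw₀ : σ w₀ = 1)
    (hL : ∀ w w', σ w = 1 → σ w' = -1 → 0 ≤ L w + L w') :
    ∃ u, ∀ w, 0 ≤ L w + σ w * u := by
  obtain ⟨w₁, hw₁, hmax⟩ := exists_max_image (univ.filter fun w => σ w = 1) (fun w => -L w)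
    ⟨w₀, by simp [hw₀]⟩
  rw [mem_filter] at hw₁
  refine ⟨-L w₁, fun w => ?_⟩
  rcases hσ w with h | h
  · rw [h]; linarith [hmax w (by simp [h])]
  · rw [h]; linarith [hL w₁ w hw₁.2 h]

noncomputable def tripleLaw (m₁ m₂ m₃ c₁₂ c₁₃ c₂₃ u : ℝ) (x y z : Bool) : ℝ :=
  (1 + sgn x * m₁ + sgn y * m₂ + sgn z * m₃ + sgn x * sgn y * c₁₂ + sgn x * sgn z * c₁₃
    + sgn y * sgn z * c₂₃ + sgn x * sgn y * sgn z * u) / 8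

theorem exists_tripleLaw_nonneg {m₁ m₂ m₃ c₁₂ c₁₃ c₂₃ : ℝ}
    (h₁₂ : IsPairMoments m₁ m₂ c₁₂) (h₁₃ : IsPairMoments m₁ m₃ c₁₃)
    (h₂₃ : IsPairMoments m₂ m₃ c₂₃) (hc : IsPairMoments c₁₂ c₁₃ c₂₃) :
    ∃ u, ∀ x y z, 0 ≤ tripleLaw m₁ m₂ m₃ c₁₂ c₁₃ c₂₃ u x y z := by
  set L : Bool × Bool × Bool → ℝ := fun w => 1 + sgn w.1 * m₁ + sgn w.2.1 * m₂ + sgn w.2.2 * m₃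
    + sgn w.1 * sgn w.2.1 * c₁₂ + sgn w.1 * sgn w.2.2 * c₁₃ + sgn w.2.1 * sgn w.2.2 * c₂₃
  set σ : Bool × Bool × Bool → ℝ := fun w => sgn w.1 * sgn w.2.1 * sgn w.2.2
  -- points of opposite parity differ in one coordinate or in all three, so `L w + L w'` is
  -- twice one of the constraints `h₁₂`, `h₁₃`, `h₂₃`, `hc`
  have hL : ∀ w w', σ w = 1 → σ w' = -1 → 0 ≤ L w + L w' := by
    obtain ⟨h₁₂₁, h₁₂₂, h₁₂₃, h₁₂₄⟩ := isPairMoments_iff.1 h₁₂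
    obtain ⟨h₁₃₁, h₁₃₂, h₁₃₃, h₁₃₄⟩ := isPairMoments_iff.1 h₁₃
    obtain ⟨h₂₃₁, h₂₃₂, h₂₃₃, h₂₃₄⟩ := isPairMoments_iff.1 h₂₃
    obtain ⟨hc₁, hc₂, hc₃, hc₄⟩ := isPairMoments_iff.1 hc
    rintro ⟨x, y, z⟩ ⟨x', y', z'⟩ hw hw'
    cases x <;> cases y <;> cases z <;> cases x' <;> cases y' <;> cases z' <;>
      simp only [L, σ, sgn, Bool.false_eq_true, ↓reduceIte] at hw hw' ⊢ <;> linarith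
  obtain ⟨u, hu⟩ := exists_forall_nonneg_add_mul (W := Bool × Bool × Bool) (L := L) (σ := σ)
    (by rintro ⟨x, y, z⟩; cases x <;> cases y <;> cases z <;> norm_num [σ, sgn])
    (w₀ := (true, true, true)) (by simp [σ, sgn]) hL
  refine ⟨u, fun x y z => ?_⟩
  have := hu (x, y, z)
  simp only [L, σ] at this
  unfold tripleLaw
  linarith

theorem sum_tripleLaw_eq_pairLaw₁₂ (m₁ m₂ m₃ c₁₂ c₁₃ c₂₃ u : ℝ) (x y : Bool) :
    ∑ z, tripleLaw m₁ m₂ m₃ c₁₂ c₁₃ c₂₃ u x y z = pairLaw m₁ m₂ c₁₂ x y := by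
  cases x <;> cases y <;>
    simp only [Fintype.sum_bool, tripleLaw, pairLaw, sgn, Bool.false_eq_true, ↓reduceIte] <;> ring

theorem sum_tripleLaw_eq_pairLaw₁₃ (m₁ m₂ m₃ c₁₂ c₁₃ c₂₃ u : ℝ) (x z : Bool) :
    ∑ y, tripleLaw m₁ m₂ m₃ c₁₂ c₁₃ c₂₃ u x y z = pairLaw m₁ m₃ c₁₃ x z := by
  cases x <;> cases z <;>
    simp only [Fintype.sum_bool, tripleLaw, pairLaw, sgn, Bool.false_eq_true, ↓reduceIte] <;> ring

theorem sum_tripleLaw_eq_pairLaw₂₃ (m₁ m₂ m₃ c₁₂ c₁₃ c₂₃ u : ℝ) (y z : Bool) :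
    ∑ x, tripleLaw m₁ m₂ m₃ c₁₂ c₁₃ c₂₃ u x y z = pairLaw m₂ m₃ c₂₃ y z := by
  cases y <;> cases z <;>
    simp only [Fintype.sum_bool, tripleLaw, pairLaw, sgn, Bool.false_eq_true, ↓reduceIte] <;> ring

theorem sum_filter_apply_zero {α M : Type*} [Fintype α] [DecidableEq α] [AddCommMonoid M]
    (g : α → α → M) (a : α) :
    ∑ v ∈ univ.filter (fun v : Fin 2 → α => v 0 = a), g (v 0) (v 1) = ∑ y, g a y := by
  rw [sum_filter, ← (finTwoArrowEquiv α).symm.sum_comp, Fintype.sum_prod_type]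
  simp

theorem sum_filter_apply_one {α M : Type*} [Fintype α] [DecidableEq α] [AddCommMonoid M]
    (g : α → α → M) (a : α) :
    ∑ v ∈ univ.filter (fun v : Fin 2 → α => v 1 = a), g (v 0) (v 1) = ∑ x, g x a := by
  rw [sum_filter, ← (finTwoArrowEquiv α).symm.sum_comp, Fintype.sum_prod_type]
  simp

section Glue

variable {X₁ X₂ Y : Type*} [Fintype X₁]

/-- The coupling of `T₁` and `T₂` that is conditionally independent given `y`. Where
`∑ x, T₁ x y = 0` the division returns `0`, which is still right since then `T₁ · y = 0`. -/
noncomputable def glue (T₁ : X₁ → Y → ℝ) (T₂ : X₂ → Y → ℝ) (x₁ : X₁) (x₂ : X₂) (y : Y) : ℝ :=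
  T₁ x₁ y * T₂ x₂ y / ∑ x, T₁ x y

variable {T₁ : X₁ → Y → ℝ} {T₂ : X₂ → Y → ℝ}

theorem glue_nonneg (h₁ : ∀ x y, 0 ≤ T₁ x y) (h₂ : ∀ x y, 0 ≤ T₂ x y) (x₁ : X₁) (x₂ : X₂)
    (y : Y) : 0 ≤ glue T₁ T₂ x₁ x₂ y :=
  div_nonneg (mul_nonneg (h₁ x₁ y) (h₂ x₂ y)) (sum_nonneg fun x _ => h₁ x y)

theorem sum_glue_right [Fintype X₂] (h₁ : ∀ x y, 0 ≤ T₁ x y)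
    (hsum : ∀ y, ∑ x, T₁ x y = ∑ x, T₂ x y) (x₁ : X₁) (y : Y) :
    ∑ x₂, glue T₁ T₂ x₁ x₂ y = T₁ x₁ y := by
  simp only [glue, ← sum_div, ← mul_sum, ← hsum]
  by_cases hy : ∑ x, T₁ x y = 0
  · rw [(sum_eq_zero_iff_of_nonneg fun x _ => h₁ x y).1 hy x₁ (mem_univ _), zero_mul, zero_div]
  · exact mul_div_cancel_right₀ _ hy

theorem sum_glue_left [Fintype X₂] (h₂ : ∀ x y, 0 ≤ T₂ x y)
    (hsum : ∀ y, ∑ x, T₁ x y = ∑ x, T₂ x y) (x₂ : X₂) (y : Y) :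
    ∑ x₁, glue T₁ T₂ x₁ x₂ y = T₂ x₂ y := by
  simp only [glue, ← sum_div, ← sum_mul]
  by_cases hy : ∑ x, T₁ x y = 0
  · rw [hy, zero_mul, zero_div, eq_comm]
    exact (sum_eq_zero_iff_of_nonneg fun x _ => h₂ x y).1 (hsum y ▸ hy) x₂ (mem_univ _)
  · exact mul_div_cancel_left₀ _ hy

end Glue

theorem sum_filter_glue {X Y : Type*} [Fintype X] [DecidableEq X] {T : Fin 2 → X → Y → ℝ}
    (hT : ∀ i x y, 0 ≤ T i x y) (hsum : ∀ y, ∑ x, T 0 x y = ∑ x, T 1 x y) (i : Fin 2) (x : X)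
    (y : Y) :
    ∑ A ∈ univ.filter (fun A : Fin 2 → X => A i = x), glue (T 0) (T 1) (A 0) (A 1) y = T i x y := by
  fin_cases i
  · exact (sum_filter_apply_zero (fun x₁ x₂ => glue (T 0) (T 1) x₁ x₂ y) x).trans
      (sum_glue_right (hT 0) hsum x y)
  · exact (sum_filter_apply_one (fun x₁ x₂ => glue (T 0) (T 1) x₁ x₂ y) x).trans
      (sum_glue_left (hT 1) hsum x y)

theorem exists_joint_of_chsh (μ : Fin 2 → Fin 2 → Bool × Bool → ℝ) (hdist : ∀ i j, IsDist (μ i j))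
    (hccA : ∀ i a, ∑ b, μ i 0 (a, b) = ∑ b, μ i 1 (a, b))
    (hccB : ∀ j b, ∑ a, μ 0 j (a, b) = ∑ a, μ 1 j (a, b))
    (hC : ∀ s : Fin 2 → Fin 2 → ℝ, (∀ i j, s i j = 1 ∨ s i j = -1) →
      s 0 0 * s 0 1 * s 1 0 * s 1 1 = -1 → ∑ i, ∑ j, s i j * corr (μ i j) ≤ 2) :
    ∃ ν : (Fin 2 → Bool) × (Fin 2 → Bool) → ℝ, IsDist ν ∧
      ∀ i j a b, ∑ v ∈ univ.filter (fun v => v.1 i = a ∧ v.2 j = b), ν v = μ i j (a, b) := by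
  have hμ := apply_eq_pairLaw_of_sum_eq hdist hccA hccB
  have hpair : ∀ i j, IsPairMoments (mean₁ (μ i 0)) (mean₂ (μ 0 j)) (corr (μ i j)) :=
    fun i j x y => hμ i j x y ▸ (hdist i j).1 (x, y)
  obtain ⟨s, hsB, hsA⟩ := exists_isPairMoments_of_chsh hpair (abs_add_add_abs_sub_le_two_of_chsh hC)
  choose u hu using fun i => exists_tripleLaw_nonneg (hpair i 0) (hpair i 1) hsB (hsA i)
  -- the law of `(A i, B 0, B 1)`
  set T : Fin 2 → Bool → (Fin 2 → Bool) → ℝ := fun i x B =>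
    tripleLaw (mean₁ (μ i 0)) (mean₂ (μ 0 0)) (mean₂ (μ 0 1)) (corr (μ i 0)) (corr (μ i 1)) s
      (u i) x (B 0) (B 1)
  have hT : ∀ i x B, 0 ≤ T i x B := fun i x B => hu i x (B 0) (B 1)
  have hTB : ∀ B, ∑ x, T 0 x B = ∑ x, T 1 x B := fun B => by
    simp only [T, sum_tripleLaw_eq_pairLaw₂₃]
  have hTA : ∀ i j x y, ∑ B ∈ univ.filter (fun B : Fin 2 → Bool => B j = y), T i x B
      = μ i j (x, y) := by
    intro i j x y
    rw [hμ]
    fin_cases j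
    exacts [(sum_filter_apply_zero _ y).trans (sum_tripleLaw_eq_pairLaw₁₂ ..),
      (sum_filter_apply_one _ y).trans (sum_tripleLaw_eq_pairLaw₁₃ ..)]
  set ν := fun v : (Fin 2 → Bool) × (Fin 2 → Bool) => glue (T 0) (T 1) (v.1 0) (v.1 1) v.2
  have hmarg : ∀ i j a b, ∑ v ∈ univ.filter (fun v => v.1 i = a ∧ v.2 j = b), ν v
      = μ i j (a, b) := by
    intro i j a b
    rw [← univ_product_univ, filter_product (fun A : Fin 2 → Bool => A i = a)
      (fun B : Fin 2 → Bool => B j = b), sum_product_right]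
    simp only [ν, sum_filter_glue hT hTB, hTA]
  refine ⟨ν, ⟨fun v => glue_nonneg (hT 0) (hT 1) _ _ _, ?_⟩, hmarg⟩
  have := sum_mul_sum_filter ν (·.1 0) (·.2 0) fun _ _ => (1 : ℝ)
  simp only [one_mul, hmarg] at this
  rw [← this, ← Fintype.sum_prod_type]
  exact (hdist 0 0).2

/-- A consistently connected cyclic rank-2 (CHSH-type) system of `±1`-valued variables is
noncontextual iff the CHSH inequality holds for all odd-sign combinations. Here `μ i j` is
the joint distribution of `(A i, B j)` in context `(i, j)` (with `true ↦ +1`, `false ↦ -1`). -/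
theorem stmt8 (μ : Fin 2 → Fin 2 → (Bool × Bool → ℝ))
    (hdist : ∀ i j, IsDist (μ i j))
    (hccA : ∀ i a, ∑ b, μ i 0 (a, b) = ∑ b, μ i 1 (a, b))
    (hccB : ∀ j b, ∑ a, μ 0 j (a, b) = ∑ a, μ 1 j (a, b)) :
    (∃ ν : (Fin 2 → Bool) × (Fin 2 → Bool) → ℝ, IsDist ν ∧
        ∀ i j a b,
          ∑ v ∈ Finset.univ.filter
              (fun v : (Fin 2 → Bool) × (Fin 2 → Bool) => v.1 i = a ∧ v.2 j = b), ν v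
            = μ i j (a, b))
    ↔ ∀ s : Fin 2 → Fin 2 → ℝ, (∀ i j, s i j = 1 ∨ s i j = -1) →
        s 0 0 * s 0 1 * s 1 0 * s 1 1 = -1 →
        (∑ i, ∑ j, s i j * ∑ a, ∑ b, sgn a * sgn b * μ i j (a, b)) ≤ 2 :=
  ⟨fun ⟨_, hν, hmarg⟩ _ hs hodd => chsh_le_two_of_joint hν hmarg hs hodd,
    exists_joint_of_chsh μ hdist hccA hccB⟩
end

section
/- A consistently connected cyclic system of rank n of ±1-valued random variables is noncontextual if and only if s_odd(E[R_1^{(1)} R_2^{(1)}], E[R_2^{(2)} R_3^{(2)}], ..., E[R_n^{(n)} R_1^{(n)}]) ≤ n - 2, where s_odd(x_1,...,x_n) is the maximum of ±x_1 ± ... ± x_n over all choices of signs with an odd number of minus signs. -/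
open Finset
open scoped Classical

/-!
A law of `±1` variables is handled through its moments: the law of a pair with means `e, f` and
correlation `c` is `pairLaw e f c`, a genuine law iff `CorrTriple e f c`, i.e. iff `e, f, c` are
the pairwise correlations of the pair together with a constant variable.

Necessity: for a fixed assignment `y` the numbers `s k * y k * y (k + 1)` are `±1` with product
`-1`, so one of them is `-1` and their sum is at most `n - 2`; average over the joint law.

Sufficiency, by induction on the rank. A chord `X m — X 0` with correlation `t` splits the cycle
`X 0, …, X (m + 1)` into the shorter cycle `X 0, …, X m` and the triangle `X m, X (m + 1), X 0`.
Every lower and every upper bound on `t` required by the two pieces comes from a path from `X m`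
to `X 0` (through the constant variable, through `X (m + 1)`, or around the shorter cycle), and a
lower bound lies below an upper bound by the odd-cycle inequality along the union of their paths.
The triangle is realized by choosing its third moment, and the two laws are glued conditionally
independently given `(X m, X 0)`.
-/

namespace CyclicSystem

@[simp] lemma sgn_true : sgn true = 1 := rfl

@[simp] lemma sgn_false : sgn false = -1 := rfl

noncomputable section

variable {α : Type*} [Fintype α]

def expectation (p g : α → ℝ) : ℝ := ∑ a, g a * p a

def pairLaw (e f c : ℝ) (x : Bool × Bool) : ℝ :=
  (1 + sgn x.1 * e + sgn x.2 * f + sgn x.1 * sgn x.2 * c) / 4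

end

/-- `x, y, z` satisfy the constraints on the pairwise correlations of three `±1` variables. -/
def CorrTriple (x y z : ℝ) : Prop :=
  0 ≤ 1 + x + y + z ∧ 0 ≤ 1 + x - y - z ∧ 0 ≤ 1 - x + y - z ∧ 0 ≤ 1 - x - y + z

def IsSigns {ι : Type*} (σ : ι → ℝ) : Prop := ∀ k, σ k = 1 ∨ σ k = -1

/-- `s_odd (c 0, …, c (N - 1)) ≤ N - 2`. -/
def SOddBound (N : ℕ) (c : ℕ → ℝ) : Prop :=
  ∀ σ : ℕ → ℝ, IsSigns σ → ∏ k ∈ range N, σ k = -1 → ∑ k ∈ range N, σ k * c k ≤ N - 2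

section PairLaws

variable {α : Type*} [Fintype α]

lemma ite_and_eq_sgn (a b u v : Bool) :
    (if a = u ∧ b = v then (1 : ℝ) else 0) = (1 + sgn u * sgn a) * (1 + sgn v * sgn b) / 4 := by
  cases a <;> cases b <;> cases u <;> cases v <;> norm_num

lemma sum_filter_eq_pairLaw {p : α → ℝ} (hp : ∑ a, p a = 1) (i j : α → Bool) (u v : Bool) :
    ∑ a ∈ univ.filter (fun a => i a = u ∧ j a = v), p a =
      pairLaw (expectation p fun a => sgn (i a)) (expectation p fun a => sgn (j a))
        (expectation p fun a => sgn (i a) * sgn (j a)) (u, v) := by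
  rw [sum_filter, pairLaw, expectation, expectation, expectation]
  conv_rhs => rw [← hp]
  simp only [mul_sum, ← sum_add_distrib, sum_div]
  refine sum_congr rfl fun a _ => ?_
  rw [← boole_mul, ite_and_eq_sgn]
  ring

lemma pairLaw_expectation {p : Bool × Bool → ℝ} (hp : ∑ x, p x = 1) (x : Bool × Bool) :
    pairLaw (expectation p fun x => sgn x.1) (expectation p fun x => sgn x.2)
      (expectation p fun x => sgn x.1 * sgn x.2) x = p x := by
  obtain ⟨u, v⟩ := x
  rw [← sum_filter_eq_pairLaw hp Prod.fst Prod.snd, sum_filter, Fintype.sum_prod_type]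
  cases u <;> cases v <;> simp

lemma sum_sgn_mul_sgn_mul_pairLaw (e f c : ℝ) :
    ∑ u, ∑ v, sgn u * sgn v * pairLaw e f c (u, v) = c := by
  simp only [pairLaw, Fintype.sum_bool, sgn_true, sgn_false]
  ring

lemma CorrTriple.of_pairLaw_nonneg {e f c : ℝ} (h : ∀ x, 0 ≤ pairLaw e f c x) :
    CorrTriple e f c := by
  have h1 := h (true, true)
  have h2 := h (true, false)
  have h3 := h (false, true)
  have h4 := h (false, false)
  simp only [pairLaw, sgn_true, sgn_false] at h1 h2 h3 h4
  refine ⟨?_, ?_, ?_, ?_⟩ <;> linarith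

lemma CorrTriple.of_isDist {p : Bool × Bool → ℝ} (hp : IsDist p) :
    CorrTriple (expectation p fun x => sgn x.1) (expectation p fun x => sgn x.2)
      (expectation p fun x => sgn x.1 * sgn x.2) :=
  .of_pairLaw_nonneg fun x => (pairLaw_expectation hp.2 x).symm ▸ hp.1 x

end PairLaws

section CorrTripleBounds

variable {x y z a b c s : ℝ}

lemma CorrTriple.abs_le_one (h : CorrTriple x y z) : |x| ≤ 1 ∧ |y| ≤ 1 ∧ |z| ≤ 1 := by
  obtain ⟨h1, h2, h3, h4⟩ := h
  refine ⟨abs_le.mpr ⟨?_, ?_⟩, abs_le.mpr ⟨?_, ?_⟩, abs_le.mpr ⟨?_, ?_⟩⟩ <;> linarith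

lemma CorrTriple.of_abs (hl : |x + y| - 1 ≤ z) (hu : z ≤ 1 - |x - y|) : CorrTriple x y z := by
  obtain ⟨h1, h2⟩ := abs_le.mp (show |x + y| ≤ 1 + z by linarith)
  obtain ⟨h3, h4⟩ := abs_le.mp (show |x - y| ≤ 1 - z by linarith)
  refine ⟨?_, ?_, ?_, ?_⟩ <;> linarith

lemma CorrTriple.abs_mul_sub_le (h : CorrTriple x y c) (hs : s = 1 ∨ s = -1) :
    |s * y - x| ≤ 1 - s * c := by
  obtain ⟨h1, h2, h3, h4⟩ := h
  rcases hs with rfl | rfl <;> exact abs_le.mpr ⟨by linarith, by linarith⟩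

lemma CorrTriple.two_link (h₁ : CorrTriple x y a) (h₂ : CorrTriple y z b) :
    |x + z| + |a - b| ≤ 2 ∧ |x - z| + |a + b| ≤ 2 := by
  obtain ⟨h1, h2, h3, h4⟩ := h₁
  obtain ⟨h5, h6, h7, h8⟩ := h₂
  constructor
  · rcases abs_cases (x + z) with ⟨h, _⟩ | ⟨h, _⟩ <;>
      rcases abs_cases (a - b) with ⟨h', _⟩ | ⟨h', _⟩ <;> linarith
  · rcases abs_cases (x - z) with ⟨h, _⟩ | ⟨h, _⟩ <;>
      rcases abs_cases (a + b) with ⟨h', _⟩ | ⟨h', _⟩ <;> linarith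

lemma abs_add_add_abs_sub_le_two (hx : |x| ≤ 1) (hy : |y| ≤ 1) : |x + y| + |x - y| ≤ 2 := by
  obtain ⟨h1, h2⟩ := abs_le.mp hx
  obtain ⟨h3, h4⟩ := abs_le.mp hy
  rcases abs_cases (x + y) with ⟨h, _⟩ | ⟨h, _⟩ <;>
    rcases abs_cases (x - y) with ⟨h', _⟩ | ⟨h', _⟩ <;> linarith

end CorrTripleBounds

section Signs

lemma sum_le_card_sub_two {ι : Type*} {S : Finset ι} {t : ι → ℝ}
    (ht : ∀ k ∈ S, t k = 1 ∨ t k = -1) (hprod : ∏ k ∈ S, t k = -1) :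
    ∑ k ∈ S, t k ≤ S.card - 2 := by
  obtain ⟨j, hj, htj⟩ : ∃ j ∈ S, t j = -1 := by
    by_contra! h
    have : ∏ k ∈ S, t k = 1 := prod_eq_one fun k hk => (ht k hk).resolve_right (h k hk)
    linarith
  have hrest := sum_le_card_nsmul (S.erase j) t 1 fun k hk => by
    rcases ht k (mem_of_mem_erase hk) with h | h <;> linarith
  rw [card_erase_of_mem hj, nsmul_eq_mul, mul_one,
    Nat.cast_sub (card_pos.mpr ⟨j, hj⟩), Nat.cast_one] at hrest
  rw [← add_sum_erase S t hj, htj]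
  linarith

lemma abs_prod_eq_one {σ : ℕ → ℝ} (hσ : IsSigns σ) (S : Finset ℕ) : |∏ k ∈ S, σ k| = 1 := by
  rw [abs_prod]
  exact prod_eq_one fun k _ => by rcases hσ k with h | h <;> simp [h]

lemma sum_mul_sgn_mul_sgn_le {n : ℕ} [NeZero n] {s : Fin n → ℝ} (hs : IsSigns s)
    (hprod : ∏ k, s k = -1) (y : Fin n → Bool) :
    ∑ k, s k * (sgn (y k) * sgn (y (k + 1))) ≤ n - 2 := by
  have hshift : ∏ k, sgn (y (k + 1)) = ∏ k, sgn (y k) :=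
    Fintype.prod_equiv (Equiv.addRight 1) _ _ fun k => rfl
  have := sum_le_card_sub_two (S := univ) (t := fun k => s k * (sgn (y k) * sgn (y (k + 1))))
    (fun k _ => by rcases hs k with h | h <;> cases y k <;> cases y (k + 1) <;> simp [h])
    (by
      rw [prod_mul_distrib, prod_mul_distrib, hprod, hshift, ← prod_mul_distrib,
        prod_eq_one fun k _ => by cases y k <;> simp]
      ring)
  simpa using this

lemma sum_mul_expectation_le {n : ℕ} [NeZero n] {ν : (Fin n → Bool) → ℝ} (hν : IsDist ν)
    {s : Fin n → ℝ} (hs : IsSigns s) (hprod : ∏ k, s k = -1) :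
    ∑ k, s k * expectation ν (fun y => sgn (y k) * sgn (y (k + 1))) ≤ n - 2 :=
  calc ∑ k, s k * expectation ν (fun y => sgn (y k) * sgn (y (k + 1)))
      = ∑ y, (∑ k, s k * (sgn (y k) * sgn (y (k + 1)))) * ν y := by
        simp only [expectation, mul_sum, sum_mul, mul_assoc]
        exact sum_comm
    _ ≤ ∑ y, ((n : ℝ) - 2) * ν y := sum_le_sum fun y _ =>
        mul_le_mul_of_nonneg_right (sum_mul_sgn_mul_sgn_le hs hprod y) (hν.1 y)
    _ = n - 2 := by rw [← mul_sum, hν.2, mul_one]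

end Signs

section Gluing

variable {α β γ : Type*} [Fintype α] [Fintype β] [Fintype γ] [DecidableEq β]

theorem exists_glue (f : α → β) {p : α → ℝ} {q : β × γ → ℝ} (hp : IsDist p)
    (hq : ∀ x, 0 ≤ q x) (hpq : ∀ b, ∑ a ∈ univ.filter (fun a => f a = b), p a = ∑ w, q (b, w)) :
    ∃ r : α × γ → ℝ, IsDist r ∧
      (∀ g : α → ℝ, expectation r (fun x => g x.1) = expectation p g) ∧
      ∀ G : β × γ → ℝ, expectation r (fun x => G (f x.1, x.2)) = expectation q G := by
  let P : β → ℝ := fun b => ∑ w, q (b, w)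
  have hP : ∀ b, P b = 0 → ∀ w, q (b, w) = 0 := fun b h w =>
    (sum_eq_zero_iff_of_nonneg fun w _ => hq (b, w)).mp h w (mem_univ w)
  have hp0 : ∀ a, P (f a) = 0 → p a = 0 := fun a h =>
    (sum_eq_zero_iff_of_nonneg fun a _ => hp.1 a).mp ((hpq (f a)).trans h) a (by simp)
  -- Where `P (f a) = 0`, both `p a` and `q (f a, ·)` vanish: the junk value `x / 0 = 0` is right.
  let r : α × γ → ℝ := fun x => p x.1 * q (f x.1, x.2) / P (f x.1)
  have hrow : ∀ a, ∑ w, r (a, w) = p a := fun a => by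
    simp only [r, ← sum_div, ← mul_sum]
    exact mul_div_cancel_of_imp (hp0 a)
  have hcol : ∀ b w, ∑ a ∈ univ.filter (fun a => f a = b), r (a, w) = q (b, w) := fun b w => by
    simp only [r]
    rw [sum_congr rfl fun a ha => by rw [(mem_filter.mp ha).2], ← sum_div, ← sum_mul, hpq]
    exact mul_div_cancel_left_of_imp fun h => hP b h w
  have hfst : ∀ g : α → ℝ, expectation r (fun x => g x.1) = expectation p g := fun g => by
    simp only [expectation, Fintype.sum_prod_type, ← mul_sum, hrow]
  refine ⟨r, ⟨fun x => div_nonneg (mul_nonneg (hp.1 _) (hq _)) (sum_nonneg fun w _ => hq _),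
    by simpa [expectation] using (hfst 1).trans (by simpa [expectation] using hp.2)⟩,
    hfst, fun G => ?_⟩
  simp only [expectation, Fintype.sum_prod_type]
  rw [sum_comm]
  conv_rhs => rw [sum_comm]
  refine sum_congr rfl fun w _ => ?_
  rw [← sum_fiberwise univ f (fun a => G (f a, w) * r (a, w))]
  refine sum_congr rfl fun b _ => ?_
  rw [sum_congr rfl fun a ha => by rw [(mem_filter.mp ha).2], ← mul_sum, hcol]

end Gluing

theorem exists_triangle_law {eX eY eZ cXY cYZ cXZ : ℝ} (hXY : CorrTriple eX eY cXY)
    (hYZ : CorrTriple eY eZ cYZ) (hXZ : CorrTriple eX eZ cXZ) (hc : CorrTriple cXY cYZ cXZ) :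
    ∃ τ : (Bool × Bool) × Bool → ℝ, IsDist τ ∧
      (∀ u v, ∑ w, τ ((u, v), w) = pairLaw eX eZ cXZ (u, v)) ∧
      expectation τ (fun x => sgn x.2) = eY ∧
      expectation τ (fun x => sgn x.1.1 * sgn x.2) = cXY ∧
      expectation τ (fun x => sgn x.2 * sgn x.1.2) = cYZ := by
  obtain ⟨a1, a2, a3, a4⟩ := hXY
  obtain ⟨b1, b2, b3, b4⟩ := hYZ
  obtain ⟨c1, c2, c3, c4⟩ := hXZ
  obtain ⟨d1, d2, d3, d4⟩ := hc
  -- The law is fixed by the given moments up to the third moment `d`; each lower bound on `d`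
  -- lies below each upper bound by one of the four hypotheses.
  let A : Bool → Bool → Bool → ℝ := fun u v w => 1 + sgn u * eX + sgn w * eY + sgn v * eZ
    + sgn u * sgn w * cXY + sgn w * sgn v * cYZ + sgn u * sgn v * cXZ
  obtain ⟨d, hlow, hup⟩ := exists_between_of_forall_le
    (s := {-A true true true, -A true false false, -A false true false, -A false false true})
    (t := {A true true false, A true false true, A false true true, A false false false})
    (by simp) (by simp) (by
      rintro l (rfl | rfl | rfl | rfl) u (rfl | rfl | rfl | rfl) <;>
        simp only [A, sgn_true, sgn_false] <;> linarith)
  simp only [mem_upperBounds, mem_lowerBounds, Set.mem_insert_iff, Set.mem_singleton_iff,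
    forall_eq_or_imp, forall_eq] at hlow hup
  refine ⟨fun x => (A x.1.1 x.1.2 x.2 + sgn x.1.1 * sgn x.1.2 * sgn x.2 * d) / 8,
    ⟨?_, ?_⟩, ?_, ?_, ?_, ?_⟩
  · rintro ⟨⟨u, v⟩, w⟩
    cases u <;> cases v <;> cases w <;> simp only [A, sgn_true, sgn_false] at hlow hup ⊢ <;>
      linarith
  · simp only [A, Fintype.sum_prod_type, Fintype.sum_bool, sgn_true, sgn_false]
    ring
  · intro u v
    simp only [A, pairLaw, Fintype.sum_bool, sgn_true, sgn_false]
    ring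
  all_goals
    simp only [A, expectation, Fintype.sum_prod_type, Fintype.sum_bool, sgn_true, sgn_false]
    ring

section Chord

variable {m : ℕ} {e c σ : ℕ → ℝ}

lemma abs_prod_mul_sub_le (hσ : IsSigns σ)
    (hlink : ∀ k < m, CorrTriple (e k) (e (k + 1)) (c k)) :
    |(∏ k ∈ range m, σ k) * e m - e 0| ≤ m - ∑ k ∈ range m, σ k * c k := by
  induction m with
  | zero => simp
  | succ m ih =>
    have hpath := ih fun k hk => hlink k (by omega)
    have hstep := (hlink m (by omega)).abs_mul_sub_le (hσ m)
    calc |(∏ k ∈ range (m + 1), σ k) * e (m + 1) - e 0|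
        = |(∏ k ∈ range m, σ k) * (σ m * e (m + 1) - e m)
            + ((∏ k ∈ range m, σ k) * e m - e 0)| := by rw [prod_range_succ]; ring_nf
      _ ≤ |σ m * e (m + 1) - e m| + |(∏ k ∈ range m, σ k) * e m - e 0| := by
        grw [abs_add_le, abs_mul, abs_prod_eq_one hσ, one_mul]
      _ ≤ (m + 1 : ℕ) - ∑ k ∈ range (m + 1), σ k * c k := by
        rw [sum_range_succ]; push_cast; linarith

lemma sum_mul_add_sum_mul_le {σ' : ℕ → ℝ} (hc : ∀ k < m, |c k| ≤ 1) (hσ : IsSigns σ)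
    (hσ' : IsSigns σ') (h : (∏ k ∈ range m, σ k) * ∏ k ∈ range m, σ' k = -1) :
    ∑ k ∈ range m, σ k * c k + ∑ k ∈ range m, σ' k * c k ≤ 2 * (m - 1) := by
  have hterm : ∀ k ∈ range m, σ k * c k + σ' k * c k ≤ 1 + σ k * σ' k := fun k hk => by
    obtain ⟨h1, h2⟩ := abs_le.mp (hc k (mem_range.mp hk))
    rcases hσ k with h | h <;> rcases hσ' k with h' | h' <;> rw [h, h'] <;> linarith
  have hprod := sum_le_card_sub_two (S := range m) (t := fun k => σ k * σ' k)
    (fun k _ => by rcases hσ k with h | h <;> rcases hσ' k with h' | h' <;> simp [h, h'])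
    (by rw [prod_mul_distrib, h])
  rw [card_range] at hprod
  calc ∑ k ∈ range m, σ k * c k + ∑ k ∈ range m, σ' k * c k
      ≤ ∑ k ∈ range m, (1 + σ k * σ' k) := by rw [← sum_add_distrib]; exact sum_le_sum hterm
    _ ≤ 2 * (m - 1) := by simp only [sum_add_distrib, sum_const, card_range, nsmul_one]; linarith

lemma SOddBound.sum_add_mul_add_mul_le (h : SOddBound (m + 2) c) (hσ : IsSigns σ)
    {w₁ w₂ : ℝ} (hw₁ : w₁ = 1 ∨ w₁ = -1) (hw₂ : w₂ = 1 ∨ w₂ = -1)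
    (hprod : (∏ k ∈ range m, σ k) * w₁ * w₂ = -1) :
    ∑ k ∈ range m, σ k * c k + w₁ * c m + w₂ * c (m + 1) ≤ m := by
  let σ' : ℕ → ℝ := fun k => if k = m then w₁ else if k = m + 1 then w₂ else σ k
  have hagree : ∀ k ∈ range m, σ' k = σ k := fun k hk => by
    have := mem_range.mp hk
    simp only [σ', if_neg (show k ≠ m by omega), if_neg (show k ≠ m + 1 by omega)]
  have hσ' : IsSigns σ' := fun k => by
    simp only [σ']
    split_ifs
    exacts [hw₁, hw₂, hσ k]
  have := h σ' hσ' (by simp [prod_range_succ, prod_congr rfl hagree, σ', hprod])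
  simp only [sum_range_succ, sum_congr rfl fun k hk => congrArg (· * c k) (hagree k hk)] at this
  simp only [σ', if_pos rfl, if_neg (show m + 1 ≠ m by omega)] at this
  push_cast at this
  linarith

theorem exists_chord (hlink : ∀ k < m + 1, CorrTriple (e k) (e (k + 1)) (c k))
    (hclose : CorrTriple (e (m + 1)) (e 0) (c (m + 1))) (hodd : SOddBound (m + 2) c) :
    ∃ t, CorrTriple (e m) (e 0) t ∧ CorrTriple (c m) (c (m + 1)) t ∧
      SOddBound (m + 1) (Function.update c m t) := by
  have hpath : ∀ k < m, CorrTriple (e k) (e (k + 1)) (c k) := fun k hk => hlink k (by omega)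
  obtain ⟨hem, -, hcm⟩ := (hlink m (by omega)).abs_le_one
  obtain ⟨-, he0, hcm'⟩ := hclose.abs_le_one
  have htwo := (hlink m (by omega)).two_link hclose
  obtain ⟨t, hl, hu⟩ := exists_between_of_forall_le
    (s := {l | l = |e m + e 0| - 1 ∨ l = |c m + c (m + 1)| - 1 ∨
      ∃ σ, IsSigns σ ∧ ∏ k ∈ range m, σ k = 1 ∧ l = ∑ k ∈ range m, σ k * c k - (m - 1)})
    (t := {u | u = 1 - |e m - e 0| ∨ u = 1 - |c m - c (m + 1)| ∨
      ∃ σ, IsSigns σ ∧ ∏ k ∈ range m, σ k = -1 ∧ u = (m - 1) - ∑ k ∈ range m, σ k * c k})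
    ⟨_, Or.inl rfl⟩ ⟨_, Or.inl rfl⟩ (by
      rintro l (rfl | rfl | ⟨σ, hσ, hp, rfl⟩) u (rfl | rfl | ⟨σ', hσ', hp', rfl⟩)
      · linarith [abs_add_add_abs_sub_le_two hem he0]
      · linarith [htwo.1]
      · have := abs_prod_mul_sub_le hσ' hpath
        rw [hp', show -1 * e m - e 0 = -(e m + e 0) by ring, abs_neg] at this
        linarith
      · linarith [htwo.2]
      · linarith [abs_add_add_abs_sub_le_two hcm hcm']
      · have h1 := hodd.sum_add_mul_add_mul_le hσ' (.inl rfl) (.inl rfl) (by rw [hp']; ring)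
        have h2 := hodd.sum_add_mul_add_mul_le hσ' (.inr rfl) (.inr rfl) (by rw [hp']; ring)
        rcases abs_cases (c m + c (m + 1)) with ⟨h, _⟩ | ⟨h, _⟩ <;> linarith
      · have := abs_prod_mul_sub_le hσ hpath
        rw [hp, one_mul] at this
        linarith
      · have h1 := hodd.sum_add_mul_add_mul_le hσ (.inl rfl) (.inr rfl) (by rw [hp]; ring)
        have h2 := hodd.sum_add_mul_add_mul_le hσ (.inr rfl) (.inl rfl) (by rw [hp]; ring)
        rcases abs_cases (c m - c (m + 1)) with ⟨h, _⟩ | ⟨h, _⟩ <;> linarith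
      · have := sum_mul_add_sum_mul_le (fun k hk => (hpath k hk).abs_le_one.2.2) hσ hσ'
          (by rw [hp, hp', one_mul])
        linarith)
  refine ⟨t, .of_abs (hl (Or.inl rfl)) (hu (Or.inl rfl)),
    .of_abs (hl (Or.inr (Or.inl rfl))) (hu (Or.inr (Or.inl rfl))), fun σ hσ hprod => ?_⟩
  have hsum : ∑ k ∈ range m, σ k * Function.update c m t k = ∑ k ∈ range m, σ k * c k :=
    sum_congr rfl fun k hk => by rw [Function.update_of_ne (mem_range.mp hk).ne]
  rw [prod_range_succ] at hprod
  rw [sum_range_succ, hsum, Function.update_self]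
  push_cast
  rcases hσ m with h | h <;> rw [h] at hprod ⊢
  · linarith [hu (Or.inr (Or.inr ⟨σ, hσ, by linarith, rfl⟩))]
  · linarith [hl (Or.inr (Or.inr ⟨σ, hσ, by linarith, rfl⟩))]

end Chord

theorem exists_snoc_law {m : ℕ} {ψ : (Fin (m + 1) → Bool) → ℝ} {τ : (Bool × Bool) × Bool → ℝ}
    (hψ : IsDist ψ) (hτ : IsDist τ)
    (h : ∀ u v, ∑ y ∈ univ.filter (fun y => y (Fin.last m) = u ∧ y 0 = v), ψ y
      = ∑ w, τ ((u, v), w)) :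
    ∃ ν : (Fin (m + 2) → Bool) → ℝ, IsDist ν ∧
      (∀ g, expectation ν (fun y => g (Fin.init y)) = expectation ψ g) ∧
      ∀ G, expectation ν (fun y => G ((y (Fin.last m).castSucc, y 0), y (Fin.last (m + 1))))
        = expectation τ G := by
  obtain ⟨r, hr, hrψ, hrτ⟩ := exists_glue (fun y => (y (Fin.last m), y 0)) hψ hτ.1
    fun ⟨u, v⟩ => by simpa only [Prod.mk.injEq] using h u v
  let E := (Equiv.prodComm _ _).trans (Fin.snocEquiv fun _ : Fin (m + 2) => Bool)
  have hE : ∀ x, E x = Fin.snoc x.1 x.2 := fun x => rfl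
  let ν : (Fin (m + 2) → Bool) → ℝ := fun y => r (Fin.init y, y (Fin.last (m + 1)))
  have hνr : ∀ g, expectation ν g = expectation r (fun x => g (E x)) := fun g => by
    simp only [expectation]
    rw [← E.sum_comp]
    simp only [ν, hE, Fin.init_snoc, Fin.snoc_last]
  refine ⟨ν, ⟨fun y => hr.1 _, ?_⟩, fun g => ?_, fun G => ?_⟩
  · simpa [expectation] using (hνr 1).trans (by simpa [expectation] using hr.2)
  · rw [hνr, ← hrψ]
    simp [hE]
  · rw [hνr, ← hrτ]
    simp [hE]

lemma exists_cycle_law_nat_zero {e c : ℕ → ℝ} (hclose : CorrTriple (e 0) (e 0) (c 0))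
    (hodd : SOddBound 1 c) :
    ∃ ν : (Fin 1 → Bool) → ℝ, IsDist ν ∧ ∀ k : Fin 1,
      expectation ν (fun y => sgn (y k)) = e k ∧
        expectation ν (fun y => sgn (y k) * sgn (y (k + 1))) = c k := by
  have hc : c 0 = 1 := by
    have := hodd (fun _ => -1) (fun _ => .inr rfl) (by simp)
    obtain ⟨-, -, h, -⟩ := hclose
    simp only [range_one, sum_singleton, Nat.cast_one] at this
    linarith
  obtain ⟨he₁, he₂⟩ := abs_le.mp hclose.abs_le_one.1
  have hsum : ∀ g : (Fin 1 → Bool) → ℝ, ∑ y, g y = g (fun _ => true) + g (fun _ => false) :=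
    fun g => by rw [← (Equiv.funUnique (Fin 1) Bool).symm.sum_comp, Fintype.sum_bool]; rfl
  refine ⟨fun y => (1 + sgn (y 0) * e 0) / 2, ⟨fun y => ?_, ?_⟩, fun k => ?_⟩
  · cases h : y 0 <;> simp only [h, sgn_true, sgn_false] <;> linarith
  · rw [hsum]
    simp only [sgn_true, sgn_false]
    ring
  · rw [Fin.fin_one_eq_zero k]
    simp only [expectation, hsum, Fin.isValue, Fin.val_zero, hc, sgn_true, sgn_false]
    constructor <;> ring

/-- `e k` is the mean of `X k` and `c k` the correlation of `X k` and `X (k + 1)`, where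
`X (m + 1) = X 0`. -/
theorem exists_cycle_law_nat (m : ℕ) {e c : ℕ → ℝ}
    (hlink : ∀ k < m, CorrTriple (e k) (e (k + 1)) (c k))
    (hclose : CorrTriple (e m) (e 0) (c m)) (hodd : SOddBound (m + 1) c) :
    ∃ ν : (Fin (m + 1) → Bool) → ℝ, IsDist ν ∧ ∀ k : Fin (m + 1),
      expectation ν (fun y => sgn (y k)) = e k ∧
        expectation ν (fun y => sgn (y k) * sgn (y (k + 1))) = c k := by
  induction m generalizing c with
  | zero => exact exists_cycle_law_nat_zero hclose hodd
  | succ m ih =>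
    obtain ⟨t, hchord, htri, hodd'⟩ := exists_chord hlink hclose hodd
    obtain ⟨ψ, hψ, hψm⟩ := ih (c := Function.update c m t)
      (fun k hk => by rw [Function.update_of_ne hk.ne]; exact hlink k (by omega))
      (by rwa [Function.update_self]) hodd'
    obtain ⟨τ, hτ, hτXZ, hτY, hτXY, hτYZ⟩ :=
      exists_triangle_law (hlink m (by omega)) hclose hchord htri
    have hψlast := hψm (Fin.last m)
    rw [Fin.last_add_one] at hψlast
    obtain ⟨ν, hν, hνψ, hντ⟩ := exists_snoc_law hψ hτ fun u v => by
      rw [sum_filter_eq_pairLaw hψ.2, hψlast.1, hψlast.2, (hψm 0).1, hτXZ]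
      simp
    refine ⟨ν, hν, Fin.lastCases ?_ fun j => ?_⟩
    · refine ⟨by simpa using (hντ fun x => sgn x.2).trans hτY, ?_⟩
      rw [Fin.last_add_one]
      simpa using (hντ fun x => sgn x.2 * sgn x.1.2).trans hτYZ
    refine ⟨by simpa [Fin.init] using (hνψ fun z => sgn (z j)).trans (hψm j).1, ?_⟩
    induction j using Fin.lastCases with
    | last =>
      rw [Fin.coeSucc_eq_succ, Fin.succ_last]
      simpa using (hντ fun x => sgn x.1.1 * sgn x.2).trans hτXY
    | cast i =>
      have h := (hνψ fun z => sgn (z i.castSucc) * sgn (z (i.castSucc + 1))).trans (hψm _).2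
      rw [Fin.coeSucc_eq_succ] at h ⊢
      simpa [Fin.init, Function.update_of_ne (Fin.is_lt i).ne] using h

section

open Fin.NatCast

theorem exists_cycle_law {n : ℕ} [NeZero n] {e c : Fin n → ℝ}
    (hlink : ∀ k, CorrTriple (e k) (e (k + 1)) (c k))
    (hodd : ∀ s : Fin n → ℝ, IsSigns s → ∏ k, s k = -1 → ∑ k, s k * c k ≤ n - 2) :
    ∃ ν : (Fin n → Bool) → ℝ, IsDist ν ∧ ∀ k : Fin n,
      expectation ν (fun y => sgn (y k)) = e k ∧
        expectation ν (fun y => sgn (y k) * sgn (y (k + 1))) = c k := by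
  obtain ⟨m, rfl⟩ : ∃ m, n = m + 1 := Nat.exists_eq_succ_of_ne_zero (NeZero.ne n)
  have hnat : ∀ k : ℕ, CorrTriple (e k) (e (k + 1 : ℕ)) (c k) := fun k => by
    simpa using hlink k
  obtain ⟨ν, hν, hνm⟩ := exists_cycle_law_nat m (e := fun j => e j) (c := fun j => c j)
    (fun k _ => hnat k) (by simpa using hnat m) fun σ hσ hprod => by
      have := hodd (fun k => σ k) (fun k => hσ k)
        (by rwa [Fin.prod_univ_eq_prod_range (fun k => σ k)])
      rw [← Fin.sum_univ_eq_sum_range (fun j => σ j * c j)]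
      simpa using this
  exact ⟨ν, hν, fun k => by simpa using hνm k⟩

end

end CyclicSystem

open CyclicSystem

/-- `μ k` is the joint law of `(R k, R (k + 1))` in context `k`, indices mod `n`, with `true ↦ +1`
and `false ↦ -1`. -/
theorem stmt9_general (n : ℕ) [NeZero n] (μ : Fin n → (Bool × Bool → ℝ))
    (hdist : ∀ k, IsDist (μ k))
    (hcc : ∀ (k : Fin n) (a : Bool), ∑ b, μ k (a, b) = ∑ b, μ (k - 1) (b, a)) :
    (∃ ν : (Fin n → Bool) → ℝ, IsDist ν ∧
        ∀ (k : Fin n) (a b : Bool),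
          ∑ y ∈ Finset.univ.filter (fun y : Fin n → Bool => y k = a ∧ y (k + 1) = b), ν y
            = μ k (a, b))
    ↔ ∀ s : Fin n → ℝ, (∀ k, s k = 1 ∨ s k = -1) → (∏ k, s k) = -1 →
        (∑ k, s k * ∑ a, ∑ b, sgn a * sgn b * μ k (a, b)) ≤ (n : ℝ) - 2 := by
  have hcorr : ∀ k, ∑ a, ∑ b, sgn a * sgn b * μ k (a, b)
      = expectation (μ k) fun x => sgn x.1 * sgn x.2 := fun k => by
    simp only [expectation, Fintype.sum_prod_type]
  constructor
  · rintro ⟨ν, hν, hνμ⟩ s hs hprod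
    have hνcorr : ∀ k, ∑ a, ∑ b, sgn a * sgn b * μ k (a, b)
        = expectation ν fun y => sgn (y k) * sgn (y (k + 1)) := fun k => by
      simp only [← hνμ k, sum_filter_eq_pairLaw hν.2, sum_sgn_mul_sgn_mul_pairLaw]
    simpa only [hνcorr] using sum_mul_expectation_le hν hs hprod
  · intro hodd
    have hsnd : ∀ k, (expectation (μ k) fun x => sgn x.2)
        = expectation (μ (k + 1)) fun x => sgn x.1 := fun k => by
      simp only [expectation, Fintype.sum_prod_type]
      rw [sum_comm]
      refine sum_congr rfl fun b _ => ?_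
      rw [← mul_sum, ← mul_sum, hcc (k + 1) b, add_sub_cancel_right]
    obtain ⟨ν, hν, hνm⟩ := exists_cycle_law (e := fun k => expectation (μ k) fun x => sgn x.1)
      (fun k => by simpa only [hcorr, hsnd] using CorrTriple.of_isDist (hdist k)) hodd
    refine ⟨ν, hν, fun k a b => ?_⟩
    rw [sum_filter_eq_pairLaw hν.2, (hνm k).1, (hνm (k + 1)).1, (hνm k).2, hcorr, ← hsnd]
    exact pairLaw_expectation (hdist k).2 (a, b)

/-- A consistently connected cyclic system of rank `n` of `±1`-valued variables is
noncontextual iff `s_odd` of the `n` within-context expectations of products is at most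
`n - 2`. Here `μ k` is the joint distribution of `(R k, R (k+1))` in context `k`
(indices mod `n`, with `true ↦ +1`, `false ↦ -1`). -/
theorem stmt9 (n : ℕ) [NeZero n] (hn : 2 ≤ n) (μ : Fin n → (Bool × Bool → ℝ))
    (hdist : ∀ k, IsDist (μ k))
    (hcc : ∀ (k : Fin n) (a : Bool), ∑ b, μ k (a, b) = ∑ b, μ (k - 1) (b, a)) :
    (∃ ν : (Fin n → Bool) → ℝ, IsDist ν ∧
        ∀ (k : Fin n) (a b : Bool),
          ∑ y ∈ Finset.univ.filter (fun y : Fin n → Bool => y k = a ∧ y (k + 1) = b), ν y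
            = μ k (a, b))
    ↔ ∀ s : Fin n → ℝ, (∀ k, s k = 1 ∨ s k = -1) → (∏ k, s k) = -1 →
        (∑ k, s k * ∑ a, ∑ b, sgn a * sgn b * μ k (a, b)) ≤ (n : ℝ) - 2 :=
  stmt9_general n μ hdist hcc
end

section
/- Equivalence of context-dependent mapping and compromised free choice: given a finite hidden-variable model with hidden variable Λ independent of settings (free choice) but context-dependent response functions, there exists another hidden-variable model with a hidden variable Λ' whose distribution depends on the settings (compromised free choice) and response functions independent of context, producing the same observable joint distributions in every context, and conversely. -/
open Finset
open scoped Classical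

/-- Equivalence of context-dependent mapping and compromised free choice: a finite
hidden-variable model with setting-independent hidden variable distribution (free choice)
but context-dependent response functions can be replaced by one with setting-dependent
hidden variable distribution but a context-independent response function, reproducing the
same observable distribution in every context `c`, and conversely. -/
theorem stmt11 {C Λ O : Type*} [Fintype C] [Fintype Λ] [Fintype O]
    (π : Λ → ℝ) (hπ : IsDist π) (f : C → Λ → O) :
    (∃ (Λ' : Type) (_ : Fintype Λ') (π' : C → Λ' → ℝ) (g : Λ' → O),
        (∀ c, IsDist (π' c)) ∧
        ∀ (c : C) (o : O),
          (∑ l ∈ Finset.univ.filter (fun l : Λ' => g l = o), π' c l)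
            = ∑ l ∈ Finset.univ.filter (fun l : Λ => f c l = o), π l)
    ∧ (∀ (Λ'' : Type) (_ : Fintype Λ'') (π'' : C → Λ'' → ℝ) (g : Λ'' → O),
        (∀ c, IsDist (π'' c)) →
        ∃ (Λ₀ : Type) (_ : Fintype Λ₀) (π₀ : Λ₀ → ℝ) (f₀ : C → Λ₀ → O),
          IsDist π₀ ∧
          ∀ (c : C) (o : O),
            (∑ l ∈ Finset.univ.filter (fun l : Λ₀ => f₀ c l = o), π₀ l)
              = ∑ l ∈ Finset.univ.filter (fun l : Λ'' => g l = o), π'' c l) := by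
  classical
  constructor
  · -- forward: Λ' = O described by Fin (card O), g = identity (via equiv)
    obtain ⟨e⟩ := Fintype.truncEquivFin O |>.nonempty
    refine ⟨Fin (Fintype.card O), inferInstance,
      fun c i => ∑ l ∈ Finset.univ.filter (fun l : Λ => f c l = e.symm i), π l,
      fun i => e.symm i, fun c => ?_, fun c o => ?_⟩
    · constructor
      · intro i; exact Finset.sum_nonneg fun l _ => hπ.1 l
      · rw [← Finset.sum_biUnion]
        · rw [← hπ.2]
          apply Finset.sum_congr _ (fun _ _ => rfl)
          ext l
          simp only [Finset.mem_biUnion, Finset.mem_univ, Finset.mem_filter, true_and,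
            iff_true]
          exact ⟨e (f c l), (e.symm_apply_apply _).symm⟩
        · intro i _ j _ hij
          simp only [Finset.disjoint_left, Finset.mem_filter]
          rintro l ⟨_, h1⟩ ⟨_, h2⟩
          exact hij (e.symm.injective (h1.symm.trans h2))
    · have : Finset.univ.filter (fun i : Fin (Fintype.card O) => e.symm i = o) = {e o} := by
        ext i; simp [Equiv.symm_apply_eq]
      rw [this, Finset.sum_singleton]
      simp only [Equiv.symm_apply_apply]
  · -- converse
    intro Λ'' _ π'' g hD
    obtain ⟨n, ⟨e⟩⟩ : ∃ n, Nonempty (C ≃ Fin n) := ⟨Fintype.card C, ⟨Fintype.equivFin C⟩⟩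
    refine ⟨Fin n → Λ'', inferInstance,
      fun h => ∏ i, π'' (e.symm i) (h i),
      fun c h => g (h (e c)), ⟨?_, ?_⟩, ?_⟩
    · intro h; exact Finset.prod_nonneg fun i _ => (hD _).1 _
    · rw [← Fintype.prod_sum (f := fun i l => π'' (e.symm i) l)]
      simp [(hD _).2]
    · intro c o
      set q : Fin n → Λ'' → ℝ := fun i l =>
        if i = e c then (if g l = o then π'' c l else 0) else π'' (e.symm i) l with hq
      have key : ∀ h : Fin n → Λ'',
          (if g (h (e c)) = o then ∏ i, π'' (e.symm i) (h i) else 0)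
            = ∏ i, q i (h i) := by
        intro h
        by_cases hg : g (h (e c)) = o
        · rw [if_pos hg]
          apply Finset.prod_congr rfl
          intro i _
          simp only [hq]
          by_cases hi : i = e c
          · subst hi; simp [hg]
          · simp [hi]
        · rw [if_neg hg]
          symm
          apply Finset.prod_eq_zero (Finset.mem_univ (e c))
          simp [hq, hg]
      rw [Finset.sum_filter]
      calc ∑ h : Fin n → Λ'', (if g (h (e c)) = o then ∏ i, π'' (e.symm i) (h i) else 0)
          = ∑ h : Fin n → Λ'', ∏ i, q i (h i) := Finset.sum_congr rfl fun h _ => key h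
        _ = ∏ i, ∑ l, q i l := (Fintype.prod_sum q).symm
        _ = ∑ l ∈ Finset.univ.filter (fun l : Λ'' => g l = o), π'' c l := by
            rw [Finset.prod_eq_single (e c)]
            · rw [Finset.sum_filter]
              exact Finset.sum_congr rfl fun l _ => by simp [hq]
            · intro i _ hi
              simp only [hq, if_neg hi]
              exact (hD _).2
            · simp
end

section
/- Modifying a single variable's distribution can change contextuality status: there exist two cyclic rank-2 systems of ±1-valued variables differing only in the distribution of one context's joint distribution such that one system is contextual and the other is noncontextual. -/
open Finset
open scoped Classical

/-- `P(A i = true)` in context `(i, j)` of the cyclic rank-2 system `μ`. -/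
def pA (μ : Fin 2 → Fin 2 → (Bool × Bool → ℝ)) (i j : Fin 2) : ℝ := ∑ b, μ i j (true, b)

/-- `P(B j = true)` in context `(i, j)` of the cyclic rank-2 system `μ`. -/
def pB (μ : Fin 2 → Fin 2 → (Bool × Bool → ℝ)) (i j : Fin 2) : ℝ := ∑ a, μ i j (a, true)

/-- CbD-noncontextuality of a (possibly inconsistently connected) cyclic rank-2 system:
there is a coupling of all eight variables (a distribution over assignments
`t : Fin 2 → Fin 2 → Bool × Bool`, with `t i j` the values of `(A i, B j)` in context
`(i,j)`) reproducing each context distribution, in which every same-content pair is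
maximally coupled (agreement probability `1 - |difference of Bernoulli parameters|`). -/
def NoncontextualCbD (μ : Fin 2 → Fin 2 → (Bool × Bool → ℝ)) : Prop :=
  ∃ ν : (Fin 2 → Fin 2 → Bool × Bool) → ℝ, IsDist ν ∧
    (∀ (i j : Fin 2) (a b : Bool),
      ∑ t ∈ Finset.univ.filter (fun t : Fin 2 → Fin 2 → Bool × Bool => t i j = (a, b)), ν t
        = μ i j (a, b)) ∧
    (∀ i : Fin 2,
      ∑ t ∈ Finset.univ.filter
          (fun t : Fin 2 → Fin 2 → Bool × Bool => (t i 0).1 = (t i 1).1), ν t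
        = 1 - |pA μ i 0 - pA μ i 1|) ∧
    (∀ j : Fin 2,
      ∑ t ∈ Finset.univ.filter
          (fun t : Fin 2 → Fin 2 → Bool × Bool => (t 0 j).2 = (t 1 j).2), ν t
        = 1 - |pB μ 0 j - pB μ 1 j|)

noncomputable def qd (a b : Bool) : ℝ := if a = b then 1/2 else 0
noncomputable def rd (a b : Bool) : ℝ := if a = b then 0 else 1/2

noncomputable def μc : Fin 2 → Fin 2 → (Bool × Bool → ℝ) :=
  fun i j p => if i = 1 ∧ j = 1 then rd p.1 p.2 else qd p.1 p.2
noncomputable def μn : Fin 2 → Fin 2 → (Bool × Bool → ℝ) :=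
  fun _ _ p => qd p.1 p.2

lemma qd_nonneg (a b : Bool) : 0 ≤ qd a b := by unfold qd; split <;> norm_num
lemma rd_nonneg (a b : Bool) : 0 ≤ rd a b := by unfold rd; split <;> norm_num

lemma isDist_μc (i j : Fin 2) : (∀ p, 0 ≤ μc i j p) ∧ ∑ p, μc i j p = 1 := by
  constructor
  · intro p; unfold μc; split
    · exact rd_nonneg _ _
    · exact qd_nonneg _ _
  · unfold μc
    by_cases h : i = 1 ∧ j = 1 <;>
      simp [h, Fintype.sum_prod_type, qd, rd] <;> norm_num

lemma isDist_μn (i j : Fin 2) : (∀ p, 0 ≤ μn i j p) ∧ ∑ p, μn i j p = 1 := by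
  constructor
  · intro p; exact qd_nonneg _ _
  · unfold μn; simp [Fintype.sum_prod_type, qd]

lemma pA_μc (i j : Fin 2) : pA μc i j = 1/2 := by
  unfold pA μc
  by_cases h : i = 1 ∧ j = 1 <;> simp [h, qd, rd]

lemma pB_μc (i j : Fin 2) : pB μc i j = 1/2 := by
  unfold pB μc
  by_cases h : i = 1 ∧ j = 1 <;> simp [h, qd, rd]

lemma pA_μn (i j : Fin 2) : pA μn i j = 1/2 := by
  unfold pA μn; simp [qd]

lemma pB_μn (i j : Fin 2) : pB μn i j = 1/2 := by
  unfold pB μn; simp [qd]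

section Main

abbrev Assign := Fin 2 → Fin 2 → Bool × Bool

lemma zero_of_filter_sum_zero (ν : Assign → ℝ) (hpos : ∀ t, 0 ≤ ν t)
    (P : Assign → Prop) [DecidablePred P]
    (h : ∑ t ∈ Finset.univ.filter P, ν t = 0) : ∀ t, P t → ν t = 0 := by
  intro t ht
  exact (Finset.sum_eq_zero_iff_of_nonneg (fun x _ => hpos x)).1 h t (by simp [ht])

noncomputable def Tν : Assign := fun _ _ => (true, true)
noncomputable def Fν : Assign := fun _ _ => (false, false)

noncomputable def ν₀ : Assign → ℝ :=
  fun t => (if t = Tν then (1:ℝ)/2 else 0) + (if t = Fν then (1:ℝ)/2 else 0)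

lemma filt_sum (P : Assign → Prop) [DecidablePred P] :
    ∑ t ∈ Finset.univ.filter P, ν₀ t
      = (if P Tν then (1:ℝ)/2 else 0) + (if P Fν then (1:ℝ)/2 else 0) := by
  unfold ν₀
  rw [Finset.sum_add_distrib, Finset.sum_ite_eq' _ Tν (fun _ => (1:ℝ)/2),
    Finset.sum_ite_eq' _ Fν (fun _ => (1:ℝ)/2)]
  simp [Finset.mem_filter]

lemma TneF : Tν ≠ Fν := by
  intro h
  have := congrFun (congrFun h 0) 0
  simp [Tν, Fν] at this

lemma μn_noncontextual : NoncontextualCbD μn := by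
  refine ⟨ν₀, ⟨?_, ?_⟩, ?_, ?_, ?_⟩
  · intro t; unfold ν₀; positivity
  · unfold ν₀
    rw [Finset.sum_add_distrib, Finset.sum_ite_eq' _ Tν (fun _ => (1:ℝ)/2),
      Finset.sum_ite_eq' _ Fν (fun _ => (1:ℝ)/2)]
    norm_num
  · intro i j a b
    rw [filt_sum]
    cases a <;> cases b <;> simp [Tν, Fν, μn, qd]
  · intro i
    rw [filt_sum]
    simp [Tν, Fν, pA_μn]; norm_num
  · intro j
    rw [filt_sum]
    simp [Tν, Fν, pB_μn]; norm_num

lemma μc_contextual : ¬ NoncontextualCbD μc := by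
  rintro ⟨ν, ⟨hpos, hsum⟩, hmarg, hA, hB⟩
  have hzero : ∀ t : Assign, ν t = 0 := by
    intro t
    by_contra hne
    -- context constraints
    have key : ∀ i j : Fin 2, μc i j (t i j) = 0 → ν t = 0 := by
      intro i j h0
      refine zero_of_filter_sum_zero ν hpos
        (fun t' : Assign => t' i j = ((t i j).1, (t i j).2)) ?_ t (by simp)
      rw [hmarg i j (t i j).1 (t i j).2]
      simpa using h0
    have hC : ∀ i j : Fin 2, ¬(i = 1 ∧ j = 1) → (t i j).1 = (t i j).2 := by
      intro i j hij
      by_contra hne'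
      exact hne (key i j (by simp [μc, hij, qd, hne']))
    have hD : (t 1 1).1 ≠ (t 1 1).2 := by
      intro heq
      exact hne (key 1 1 (by simp [μc, rd, heq]))
    -- coupling constraints
    have hAc : ∀ i : Fin 2, (t i 0).1 = (t i 1).1 := by
      intro i
      by_contra hne'
      have h1 := hA i
      rw [pA_μc, pA_μc] at h1
      norm_num at h1
      have h2 := Finset.sum_filter_add_sum_filter_not Finset.univ
        (fun t' : Assign => (t' i 0).1 = (t' i 1).1) ν
      rw [h1, hsum] at h2
      have h3 : ∑ t' ∈ Finset.univ.filter
          (fun t' : Assign => ¬ (t' i 0).1 = (t' i 1).1), ν t' = 0 := by linarith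
      exact hne (zero_of_filter_sum_zero ν hpos _ h3 t hne')
    have hBc : ∀ j : Fin 2, (t 0 j).2 = (t 1 j).2 := by
      intro j
      by_contra hne'
      have h1 := hB j
      rw [pB_μc, pB_μc] at h1
      norm_num at h1
      have h2 := Finset.sum_filter_add_sum_filter_not Finset.univ
        (fun t' : Assign => (t' 0 j).2 = (t' 1 j).2) ν
      rw [h1, hsum] at h2
      have h3 : ∑ t' ∈ Finset.univ.filter
          (fun t' : Assign => ¬ (t' 0 j).2 = (t' 1 j).2), ν t' = 0 := by linarith
      exact hne (zero_of_filter_sum_zero ν hpos _ h3 t hne')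
    apply hD
    calc (t 1 1).1 = (t 1 0).1 := (hAc 1).symm
      _ = (t 1 0).2 := hC 1 0 (by simp)
      _ = (t 0 0).2 := (hBc 0).symm
      _ = (t 0 0).1 := (hC 0 0 (by simp)).symm
      _ = (t 0 1).1 := hAc 0
      _ = (t 0 1).2 := hC 0 1 (by simp)
      _ = (t 1 1).2 := hBc 1
  rw [Finset.sum_eq_zero (fun t _ => hzero t)] at hsum
  norm_num at hsum

end Main

/-- Modifying a single context's distribution can change the contextuality status: there
exist two cyclic rank-2 systems coinciding in all contexts but one, such that one system is
contextual and the other is noncontextual. -/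
theorem stmt15 :
    ∃ (μ μ' : Fin 2 → Fin 2 → (Bool × Bool → ℝ)) (i₀ j₀ : Fin 2),
      (∀ i j, IsDist (μ i j)) ∧ (∀ i j, IsDist (μ' i j)) ∧
      (∀ i j, (i, j) ≠ (i₀, j₀) → μ i j = μ' i j) ∧
      ¬ NoncontextualCbD μ ∧ NoncontextualCbD μ' := by
  refine ⟨μc, μn, 1, 1, isDist_μc, isDist_μn, ?_, μc_contextual, μn_noncontextual⟩
  intro i j hij
  funext p
  have h : ¬ (i = 1 ∧ j = 1) := by
    rintro ⟨rfl, rfl⟩; exact hij rfl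
  simp [μc, μn, h]
end
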